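/- arXiv:math/0102036 — 3 statements merged into one kernel-verified Lean document; each statement's English description precedes it below -/
import Mathlib

section
/- Let q not be a root of unity, let l, l' ∈ (1/2)ℤ with l, l' ≥ 0, and let ε, ε' ∈ {1, −1, i, −i}. Assume either (ε, ε' ∈ {1, −1}), or (ε, ε' ∈ {i, −i}), or (l + l' ∉ ℤ). Then for every j ∈ ℤ the operators (T_l^{(ε)} ⊗ T_{l'}^{(ε')})(q^j·K1K2 + q^{−j}·K1⁻¹K2⁻¹) and (T_l^{(ε)} ⊗ T_{l'}^{(ε')})(q^j·K1K2⁻¹ + q^{−j}·K1⁻¹K2) are invertible, the representation T_l^{(ε)} ⊗ T_{l'}^{(ε')} of Û_q(sl_2)^{⊗2} extends uniquely to a representation of Û_q(sl_2)^{⊗2,ext} by sending u_j and v_j to the inverses of these operators, and this extended representation is irreducible. -/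
noncomputable section

open Classical

/-- The q-number `[a]` for the half-integer `a/2` (argument is the doubled half-integer;
`s` is the fixed square root `q^{1/2}`). -/
def qNum (q s : ℂ) (a : ℤ) : ℂ := (s ^ a - s ^ (-a)) / (q - q⁻¹)

/-- Generators of `Û_q(sl_2)^{⊗2}`: two copies (indexed by `Fin 2`) of `e, f, K, K⁻¹, x`. -/
inductive QG : Type
  | e : Fin 2 → QG
  | f : Fin 2 → QG
  | K : Fin 2 → QG
  | Ki : Fin 2 → QG
  | x : Fin 2 → QG

/-- The copy (`0` or `1`) to which a generator belongs. -/
def QG.copy : QG → Fin 2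
  | .e i => i | .f i => i | .K i => i | .Ki i => i | .x i => i

/-- The Casimir element `c_i = e_i f_i + (q⁻¹ K_i² + q K_i⁻²)/(q−q⁻¹)²` in a free algebra,
relative to an interpretation `g` of the generators. -/
def casFree {X : Type} (q : ℂ) (g : QG → FreeAlgebra ℂ X) (i : Fin 2) : FreeAlgebra ℂ X :=
  g (QG.e i) * g (QG.f i) +
    ((q - q⁻¹) ^ 2)⁻¹ • (q⁻¹ • (g (QG.K i)) ^ 2 + q • (g (QG.Ki i)) ^ 2)

/-- Defining relations of `Û_q(sl_2)^{⊗2}`, relative to an interpretation `g` of the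
generators in a free algebra: the `U_q(sl_2)` relations in each copy, the Casimir quartic
relation for the central elements `x_i`, centrality of `x_i`, and commutation of the two
copies. -/
inductive BaseRel (q : ℂ) {X : Type} (g : QG → FreeAlgebra ℂ X) :
    FreeAlgebra ℂ X → FreeAlgebra ℂ X → Prop
  | KKi (i : Fin 2) : BaseRel q g (g (QG.K i) * g (QG.Ki i)) 1
  | KiK (i : Fin 2) : BaseRel q g (g (QG.Ki i) * g (QG.K i)) 1
  | Ke (i : Fin 2) : BaseRel q g (g (QG.K i) * g (QG.e i)) (q • (g (QG.e i) * g (QG.K i)))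
  | Kf (i : Fin 2) : BaseRel q g (g (QG.K i) * g (QG.f i)) (q⁻¹ • (g (QG.f i) * g (QG.K i)))
  | ef (i : Fin 2) : BaseRel q g (g (QG.e i) * g (QG.f i) - g (QG.f i) * g (QG.e i))
      ((q - q⁻¹)⁻¹ • ((g (QG.K i)) ^ 2 - (g (QG.Ki i)) ^ 2))
  | xe (i : Fin 2) : BaseRel q g (g (QG.x i) * g (QG.e i)) (g (QG.e i) * g (QG.x i))
  | xf (i : Fin 2) : BaseRel q g (g (QG.x i) * g (QG.f i)) (g (QG.f i) * g (QG.x i))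
  | xK (i : Fin 2) : BaseRel q g (g (QG.x i) * g (QG.K i)) (g (QG.K i) * g (QG.x i))
  | xKi (i : Fin 2) : BaseRel q g (g (QG.x i) * g (QG.Ki i)) (g (QG.Ki i) * g (QG.x i))
  | quartic (i : Fin 2) : BaseRel q g
      (q⁻¹ • (g (QG.x i)) ^ 4 - (q - q⁻¹) ^ 2 • (casFree q g i * (g (QG.x i)) ^ 2) + q • 1) 0
  | cross (a b : QG) (ha : QG.copy a = 0) (hb : QG.copy b = 1) :
      BaseRel q g (g a * g b) (g b * g a)

/-- The algebra `Û_q(sl_2)^{⊗2}`. -/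
abbrev Uhat2 (q : ℂ) : Type := RingQuot (BaseRel q (FreeAlgebra.ι ℂ : QG → FreeAlgebra ℂ QG))

/-- The image of a generator in `Û_q(sl_2)^{⊗2}`. -/
def gen2 (q : ℂ) (a : QG) : Uhat2 q :=
  RingQuot.mkAlgHom ℂ (BaseRel q (FreeAlgebra.ι ℂ)) (FreeAlgebra.ι ℂ a)

/-- Generators of `Û_q(sl_2)^{⊗2,ext}`: those of `Û_q(sl_2)^{⊗2}` together with the
elements `u_j`, `v_j` (`j ∈ ℤ`). -/
inductive QGE : Type
  | base : QG → QGE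
  | u : ℤ → QGE
  | v : ℤ → QGE

namespace ExtFree

/-- Interpretation of the basic generators in the free algebra on `QGE`. -/
def g (a : QG) : FreeAlgebra ℂ QGE := FreeAlgebra.ι ℂ (QGE.base a)
/-- The generator `u_j` in the free algebra on `QGE`. -/
def U (j : ℤ) : FreeAlgebra ℂ QGE := FreeAlgebra.ι ℂ (QGE.u j)
/-- The generator `v_j` in the free algebra on `QGE`. -/
def V (j : ℤ) : FreeAlgebra ℂ QGE := FreeAlgebra.ι ℂ (QGE.v j)
/-- The element `q^j K1 K2 + q^{−j} K1⁻¹ K2⁻¹` (to be inverted by `u_j`). -/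
def P (q : ℂ) (j : ℤ) : FreeAlgebra ℂ QGE :=
  q ^ j • (g (QG.K 0) * g (QG.K 1)) + q ^ (-j) • (g (QG.Ki 0) * g (QG.Ki 1))
/-- The element `q^j K1 K2⁻¹ + q^{−j} K1⁻¹ K2` (to be inverted by `v_j`). -/
def Q (q : ℂ) (j : ℤ) : FreeAlgebra ℂ QGE :=
  q ^ j • (g (QG.K 0) * g (QG.Ki 1)) + q ^ (-j) • (g (QG.Ki 0) * g (QG.K 1))

end ExtFree

open ExtFree in
/-- Defining relations of `Û_q(sl_2)^{⊗2,ext}`: those of `Û_q(sl_2)^{⊗2}` together with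
the relations making `u_j`, `v_j` two-sided inverses of `q^j K1K2 + q^{−j} K1⁻¹K2⁻¹` and
`q^j K1K2⁻¹ + q^{−j} K1⁻¹K2`, commuting with `K_i^{±1}`, `x_i`, and shifted past
`e_i`, `f_i`. -/
inductive ExtRel (q : ℂ) : FreeAlgebra ℂ QGE → FreeAlgebra ℂ QGE → Prop
  | ofBase {a b : FreeAlgebra ℂ QGE} : BaseRel q ExtFree.g a b → ExtRel q a b
  | uInvL (j : ℤ) : ExtRel q (U j * P q j) 1
  | uInvR (j : ℤ) : ExtRel q (P q j * U j) 1
  | vInvL (j : ℤ) : ExtRel q (V j * Q q j) 1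
  | vInvR (j : ℤ) : ExtRel q (Q q j * V j) 1
  | uK (j : ℤ) (i : Fin 2) : ExtRel q (U j * g (QG.K i)) (g (QG.K i) * U j)
  | uKi (j : ℤ) (i : Fin 2) : ExtRel q (U j * g (QG.Ki i)) (g (QG.Ki i) * U j)
  | ux (j : ℤ) (i : Fin 2) : ExtRel q (U j * g (QG.x i)) (g (QG.x i) * U j)
  | vK (j : ℤ) (i : Fin 2) : ExtRel q (V j * g (QG.K i)) (g (QG.K i) * V j)
  | vKi (j : ℤ) (i : Fin 2) : ExtRel q (V j * g (QG.Ki i)) (g (QG.Ki i) * V j)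
  | vx (j : ℤ) (i : Fin 2) : ExtRel q (V j * g (QG.x i)) (g (QG.x i) * V j)
  | ue (j : ℤ) (i : Fin 2) : ExtRel q (U j * g (QG.e i)) (g (QG.e i) * U (j + 1))
  | uf (j : ℤ) (i : Fin 2) : ExtRel q (U j * g (QG.f i)) (g (QG.f i) * U (j - 1))
  | ve1 (j : ℤ) : ExtRel q (V j * g (QG.e 0)) (g (QG.e 0) * V (j + 1))
  | vf1 (j : ℤ) : ExtRel q (V j * g (QG.f 0)) (g (QG.f 0) * V (j - 1))
  | ve2 (j : ℤ) : ExtRel q (V j * g (QG.e 1)) (g (QG.e 1) * V (j - 1))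
  | vf2 (j : ℤ) : ExtRel q (V j * g (QG.f 1)) (g (QG.f 1) * V (j + 1))

/-- The algebra `Û_q(sl_2)^{⊗2,ext}`. -/
abbrev UhatExt (q : ℂ) : Type := RingQuot (ExtRel q)

/-- The image of a generator in `Û_q(sl_2)^{⊗2,ext}`. -/
def genE (q : ℂ) (a : QGE) : UhatExt q :=
  RingQuot.mkAlgHom ℂ (ExtRel q) (FreeAlgebra.ι ℂ a)

/-- `e_i` in `Û_q(sl_2)^{⊗2,ext}` (copy `i ∈ {0,1}` corresponds to subscript `i+1`). -/
def eE (q : ℂ) (i : Fin 2) : UhatExt q := genE q (QGE.base (QG.e i))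
/-- `f_i` in `Û_q(sl_2)^{⊗2,ext}`. -/
def fE (q : ℂ) (i : Fin 2) : UhatExt q := genE q (QGE.base (QG.f i))
/-- `K_i` in `Û_q(sl_2)^{⊗2,ext}`. -/
def KE (q : ℂ) (i : Fin 2) : UhatExt q := genE q (QGE.base (QG.K i))
/-- `K_i⁻¹` in `Û_q(sl_2)^{⊗2,ext}`. -/
def KiE (q : ℂ) (i : Fin 2) : UhatExt q := genE q (QGE.base (QG.Ki i))
/-- `x_i` in `Û_q(sl_2)^{⊗2,ext}`. -/
def xE (q : ℂ) (i : Fin 2) : UhatExt q := genE q (QGE.base (QG.x i))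
/-- `u_j` in `Û_q(sl_2)^{⊗2,ext}`. -/
def uE (q : ℂ) (j : ℤ) : UhatExt q := genE q (QGE.u j)
/-- `v_j` in `Û_q(sl_2)^{⊗2,ext}`. -/
def vE (q : ℂ) (j : ℤ) : UhatExt q := genE q (QGE.v j)

/-- The Casimir element `c_i` of the `i`-th copy in `Û_q(sl_2)^{⊗2,ext}`. -/
def casE (q : ℂ) (i : Fin 2) : UhatExt q :=
  eE q i * fE q i + ((q - q⁻¹) ^ 2)⁻¹ • (q⁻¹ • (KE q i) ^ 2 + q • (KiE q i) ^ 2)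

/-- The two-sided inverse `x_i⁻¹ = q⁻¹(−x_i³ q⁻¹ + c_i (q−q⁻¹)² x_i)` of `x_i`. -/
def xinvE (q : ℂ) (i : Fin 2) : UhatExt q :=
  q⁻¹ • (-(q⁻¹ • (xE q i) ^ 3) + (q - q⁻¹) ^ 2 • (casE q i * xE q i))

/-- The image of `I_21` under the homomorphism `φ` of Theorem 2:
`φ(I21) = i (K1K2 − K1⁻¹K2⁻¹)/(q − q⁻¹)`. -/
def phi21 (q : ℂ) : UhatExt q :=
  (Complex.I * (q - q⁻¹)⁻¹) • (KE q 0 * KE q 1 - KiE q 0 * KiE q 1)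

/-- The image of `I_43` under the homomorphism `φ` of Theorem 2:
`φ(I43) = i (K1K2⁻¹ − K1⁻¹K2)/(q − q⁻¹)`. -/
def phi43 (q : ℂ) : UhatExt q :=
  (Complex.I * (q - q⁻¹)⁻¹) • (KE q 0 * KiE q 1 - KiE q 0 * KE q 1)

/-- The image of `I_32` under the homomorphism `φ` of Theorem 2 (formula (25)). -/
def phi32 (q : ℂ) : UhatExt q :=
  -((q • (xinvE q 0 * KiE q 1) + q⁻¹ • (xE q 0 * KE q 1)) * uE q (-1) * vE q 1 * eE q 1)
  + (q • (xinvE q 0 * KE q 1) + q⁻¹ • (xE q 0 * KiE q 1)) * uE q 1 * vE q (-1) * fE q 1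
  + (q • (xinvE q 1 * KiE q 0) + q⁻¹ • (xE q 1 * KE q 0)) * uE q (-1) * vE q (-1) * eE q 0
  - (q • (xinvE q 1 * KE q 0) + q⁻¹ • (xE q 1 * KiE q 0)) * uE q 1 * vE q 1 * fE q 0

/-- Index set `{m : −l ≤ m ≤ l, m ≡ l (mod 2)}` (doubled half-integers) for the weights
of the `(2l+1)`-dimensional representation of `U_q(sl_2)`. -/
def mSupp (l : ℤ) : Finset ℤ := (Finset.Icc (-l) l).filter (fun m => (l - m) % 2 = 0)

/-- Index set for the tensor product representation. -/
def tSupp (l l' : ℤ) : Finset (ℤ × ℤ) := (mSupp l) ×ˢ (mSupp l')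

/-- Basis vector `|l,m⟩ ⊗ |l',m'⟩` of the tensor product space (zero if out of range). -/
def tvec (l l' : ℤ) (p : ℤ × ℤ) : (↥(tSupp l l') → ℂ) :=
  fun b => if (b : ℤ × ℤ) = p then 1 else 0

/-- The sign with which `T_l^{(ε)}(f)` differs from `T_l^{(1)}(f)`: it is `−1` for
`ε = ±i` and `+1` for `ε = ±1`. -/
def fSign (ε : ℂ) : ℂ := if ε = Complex.I ∨ ε = -Complex.I then -1 else 1

/-- The representation `T_l^{(ε)} ⊗ T_{l'}^{(ε')}` of `Û_q(sl_2)^{⊗2}`, characterized by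
its values on the generators (doubled half-integer indices; `q^m = s^m` for doubled `m`):
`T(K)|l,m⟩ = ε q^m |l,m⟩`, `T(e)|l,m⟩ = [l−m] |l,m+1⟩`,
`T(f)|l,m⟩ = ± [l+m] |l,m−1⟩`, `T(x) = q^{−l}`, in each factor. -/
def IsTensorRep (q s : ℂ) (l l' : ℤ) (ε ε' : ℂ)
    (T : Uhat2 q →ₐ[ℂ] Module.End ℂ (↥(tSupp l l') → ℂ)) : Prop :=
  ∀ m m' : ℤ, (m, m') ∈ tSupp l l' →
    T (gen2 q (QG.K 0)) (tvec l l' (m, m')) = (ε * s ^ m) • tvec l l' (m, m') ∧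
    T (gen2 q (QG.Ki 0)) (tvec l l' (m, m')) = (ε * s ^ m)⁻¹ • tvec l l' (m, m') ∧
    T (gen2 q (QG.e 0)) (tvec l l' (m, m')) = qNum q s (l - m) • tvec l l' (m + 2, m') ∧
    T (gen2 q (QG.f 0)) (tvec l l' (m, m')) =
      (fSign ε * qNum q s (l + m)) • tvec l l' (m - 2, m') ∧
    T (gen2 q (QG.x 0)) (tvec l l' (m, m')) = s ^ (-l) • tvec l l' (m, m') ∧
    T (gen2 q (QG.K 1)) (tvec l l' (m, m')) = (ε' * s ^ m') • tvec l l' (m, m') ∧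
    T (gen2 q (QG.Ki 1)) (tvec l l' (m, m')) = (ε' * s ^ m')⁻¹ • tvec l l' (m, m') ∧
    T (gen2 q (QG.e 1)) (tvec l l' (m, m')) = qNum q s (l' - m') • tvec l l' (m, m' + 2) ∧
    T (gen2 q (QG.f 1)) (tvec l l' (m, m')) =
      (fSign ε' * qNum q s (l' + m')) • tvec l l' (m, m' - 2) ∧
    T (gen2 q (QG.x 1)) (tvec l l' (m, m')) = s ^ (-l') • tvec l l' (m, m')

/-- The element `q^j K1K2 + q^{−j} K1⁻¹K2⁻¹` of `Û_q(sl_2)^{⊗2}`. -/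
def P2 (q : ℂ) (j : ℤ) : Uhat2 q :=
  q ^ j • (gen2 q (QG.K 0) * gen2 q (QG.K 1)) + q ^ (-j) • (gen2 q (QG.Ki 0) * gen2 q (QG.Ki 1))

/-- The element `q^j K1K2⁻¹ + q^{−j} K1⁻¹K2` of `Û_q(sl_2)^{⊗2}`. -/
def Q2 (q : ℂ) (j : ℤ) : Uhat2 q :=
  q ^ j • (gen2 q (QG.K 0) * gen2 q (QG.Ki 1)) + q ^ (-j) • (gen2 q (QG.Ki 0) * gen2 q (QG.K 1))

/-!
On the weight vector `|l,m⟩ ⊗ |l',m'⟩` the operator `q^j K1K2^{±1} + q^{−j}K1⁻¹K2^{∓1}` acts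
by `X + X⁻¹`, where `X² = ε²ε'² q^N` for an integer `N = 2j + 2m ± 2m'` of the same parity as
`2(l + l')`. As `q` is not a root of unity, `X² = −1` is excluded by the hypothesis on `ε, ε'`,
so these diagonal operators are invertible. Sending `u_j`, `v_j` to their inverses respects the
relations since `e_i`, `f_i` shift the weights exactly as the relations shift `j`; uniqueness
holds because inverses are unique. For irreducibility, the weights of `K1`, `K2` separate the
basis, so a nonzero invariant subspace contains a basis vector; `e_i`, `f_i` have nonzero
coefficients `[l − m]`, `[l + m]` inside the weight diagram, so they reach every other basis
vector.
-/

section NotRootOfUnity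

variable {q s : ℂ}

theorem zpow_eq_one_iff_of_not_root (hroot : ∀ n : ℕ, 1 ≤ n → q ^ n ≠ 1) {N : ℤ} :
    q ^ N = 1 ↔ N = 0 := by
  refine ⟨fun h => ?_, fun h => by rw [h, zpow_zero]⟩
  by_contra hN
  refine hroot N.natAbs (by omega) ?_
  rcases Int.natAbs_eq N with hN' | hN' <;> rw [hN'] at h
  · exact_mod_cast h
  · rwa [zpow_neg, inv_eq_one, zpow_natCast] at h

theorem zpow_ne_neg_one_of_not_root (hq0 : q ≠ 0) (hroot : ∀ n : ℕ, 1 ≤ n → q ^ n ≠ 1) (N : ℤ) :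
    q ^ N ≠ -1 := by
  intro h
  have hN : N + N = 0 :=
    (zpow_eq_one_iff_of_not_root hroot).1 (by rw [zpow_add₀ hq0, h]; norm_num)
  rw [show N = 0 by omega, zpow_zero] at h
  norm_num at h

theorem sub_inv_ne_zero_of_not_root (hq0 : q ≠ 0) (hroot : ∀ n : ℕ, 1 ≤ n → q ^ n ≠ 1) :
    q - q⁻¹ ≠ 0 := by
  rw [sub_ne_zero]
  intro h
  refine hroot 2 (by norm_num) ?_
  rw [sq]; nth_rw 2 [h]; exact mul_inv_cancel₀ hq0

theorem zpow_two_mul_of_sq_eq (hs : s ^ 2 = q) (a : ℤ) : s ^ (2 * a) = q ^ a := by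
  rw [zpow_mul, ← hs]; norm_cast

theorem ne_zero_of_sq_eq (hq0 : q ≠ 0) (hs : s ^ 2 = q) : s ≠ 0 := by
  rintro rfl; exact hq0 (by simp [← hs])

theorem eq_of_zpow_eq_of_not_root (hq0 : q ≠ 0) (hroot : ∀ n : ℕ, 1 ≤ n → q ^ n ≠ 1)
    (hs : s ^ 2 = q) {m n : ℤ} (hmn : Even (m - n)) (h : s ^ m = s ^ n) : m = n := by
  obtain ⟨t, ht⟩ := hmn
  have hs0 := ne_zero_of_sq_eq hq0 hs
  have : q ^ t = 1 := by
    rw [← zpow_two_mul_of_sq_eq hs, two_mul, ← ht, zpow_sub₀ hs0, h,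
      div_self (zpow_ne_zero _ hs0)]
  have := (zpow_eq_one_iff_of_not_root hroot).1 this
  omega

theorem qNum_ne_zero (hq0 : q ≠ 0) (hroot : ∀ n : ℕ, 1 ≤ n → q ^ n ≠ 1) (hs : s ^ 2 = q)
    {a : ℤ} (ha : a ≠ 0) : qNum q s a ≠ 0 := by
  refine div_ne_zero (fun h => ha ?_) (sub_inv_ne_zero_of_not_root hq0 hroot)
  have := eq_of_zpow_eq_of_not_root hq0 hroot hs (m := a) (n := -a) ⟨a, by ring⟩
    (sub_eq_zero.1 h)
  omega

theorem mul_zpow_add_inv_ne_zero (hq0 : q ≠ 0) (hroot : ∀ n : ℕ, 1 ≤ n → q ^ n ≠ 1)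
    (hs : s ^ 2 = q) {η : ℂ} {N : ℤ} (hη : η ^ 2 = 1 ∨ (η ^ 2 = -1 ∧ Odd N)) :
    η * s ^ N + (η * s ^ N)⁻¹ ≠ 0 := by
  have hη0 : η ≠ 0 := by rintro rfl; rcases hη with h | h <;> norm_num at h
  have hX0 : η * s ^ N ≠ 0 := mul_ne_zero hη0 (zpow_ne_zero _ (ne_zero_of_sq_eq hq0 hs))
  intro h
  have hX : η ^ 2 * q ^ N = -1 := by
    rw [← zpow_two_mul_of_sq_eq hs, mul_comm 2 N, zpow_mul, zpow_two]
    linear_combination (η * s ^ N) * h - (mul_inv_cancel₀ hX0)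
  rcases hη with h1 | ⟨h1, hN⟩
  · exact zpow_ne_neg_one_of_not_root hq0 hroot N (by simpa [h1] using hX)
  · have : N = 0 := (zpow_eq_one_iff_of_not_root hroot).1 (by linear_combination -hX + q ^ N * h1)
    simp [this] at hN

end NotRootOfUnity

open Finset in
theorem Submodule.single_mem_of_separating {ι κ K : Type*} [Field K] [Fintype ι] [DecidableEq ι]
    {W : Submodule K (ι → K)} (d : κ → ι → K) (hW : ∀ k, ∀ v ∈ W, d k * v ∈ W)
    (hsep : Pairwise fun i j => ∃ k, d k i ≠ d k j) {w : ι → K} (hw : w ∈ W) {i : ι}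
    (hi : w i ≠ 0) : Pi.single i 1 ∈ W := by
  induction hn : #(univ.filter fun j => w j ≠ 0) using Nat.strong_induction_on
    generalizing w with
  | _ n ih =>
  by_cases hsingle : ∀ j ≠ i, w j = 0
  · have hw_eq : w = w i • Pi.single i 1 := by
      ext j
      by_cases hj : j = i
      · subst hj; simp
      · simp [hj, hsingle j hj]
    rw [hw_eq] at hw
    exact (W.smul_mem_iff hi).1 hw
  push Not at hsingle
  obtain ⟨j, hji, hj⟩ := hsingle
  obtain ⟨k, hk⟩ := hsep (Ne.symm hji)
  set w' := d k * w - d k j • w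
  have hw' : w' ∈ W := W.sub_mem (hW k w hw) (W.smul_mem _ hw)
  have hsub : univ.filter (fun j => w' j ≠ 0) ⊂ univ.filter fun j => w j ≠ 0 := by
    refine (ssubset_iff_of_subset fun x hx => ?_).2 ⟨j, by simp [hj], by simp [w']⟩
    simp only [mem_filter, mem_univ, true_and] at hx ⊢
    exact fun h => hx (by simp [w', h])
  refine ih _ (hn ▸ card_lt_card hsub) hw' ?_ rfl
  simpa [w', ← sub_mul] using mul_ne_zero (sub_ne_zero.2 hk) hi

section Diagonal

variable {l l' : ℤ}

/-- The operator acting on `|l,m⟩ ⊗ |l',m'⟩` by the scalar `d (m, m')`. -/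
def diagOp (l l' : ℤ) : (ℤ × ℤ → ℂ) →ₐ[ℂ] Module.End ℂ (↥(tSupp l l') → ℂ) :=
  (Algebra.lmul ℂ _).comp (AlgHom.pi fun b => Pi.evalAlgHom ℂ (fun _ => ℂ) (b : ℤ × ℤ))

theorem diagOp_apply (d : ℤ × ℤ → ℂ) (v : ↥(tSupp l l') → ℂ) (b : ↥(tSupp l l')) :
    diagOp l l' d v b = d b * v b := rfl

theorem diagOp_eq_mul (d : ℤ × ℤ → ℂ) (v : ↥(tSupp l l') → ℂ) :
    diagOp l l' d v = (fun b : ↥(tSupp l l') => d b) * v := rfl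

theorem tvec_coe (b : ↥(tSupp l l')) : tvec l l' b = Pi.single b 1 := by
  ext c
  simp only [tvec, Pi.single_apply, ← Subtype.ext_iff]

theorem diagOp_tvec (d : ℤ × ℤ → ℂ) (p : ℤ × ℤ) :
    diagOp l l' d (tvec l l' p) = d p • tvec l l' p := by
  ext b
  by_cases h : (b : ℤ × ℤ) = p <;> simp [diagOp_apply, tvec, h]

theorem ext_tvec {A B : Module.End ℂ (↥(tSupp l l') → ℂ)}
    (h : ∀ p ∈ tSupp l l', A (tvec l l' p) = B (tvec l l' p)) : A = B :=
  (Pi.basisFun ℂ _).ext fun b => by simpa [tvec_coe] using h b b.2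

theorem eq_top_of_tvec_mem {W : Submodule ℂ (↥(tSupp l l') → ℂ)}
    (h : ∀ p ∈ tSupp l l', tvec l l' p ∈ W) : W = ⊤ := by
  rw [eq_top_iff, ← (Pi.basisFun ℂ _).span_eq, Submodule.span_le]
  rintro _ ⟨b, rfl⟩
  simpa [tvec_coe] using h b b.2

theorem diagOp_congr {d d' : ℤ × ℤ → ℂ} (h : ∀ p ∈ tSupp l l', d p = d' p) :
    diagOp l l' d = diagOp l l' d' :=
  ext_tvec fun p hp => by rw [diagOp_tvec, diagOp_tvec, h p hp]

theorem diagOp_mul_diagOp_inv {d : ℤ × ℤ → ℂ} (h : ∀ p ∈ tSupp l l', d p ≠ 0) :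
    diagOp l l' d * diagOp l l' d⁻¹ = 1 := by
  rw [← map_mul, ← map_one (diagOp l l')]
  exact diagOp_congr fun p hp => mul_inv_cancel₀ (h p hp)

theorem diagOp_inv_mul_diagOp {d : ℤ × ℤ → ℂ} (h : ∀ p ∈ tSupp l l', d p ≠ 0) :
    diagOp l l' d⁻¹ * diagOp l l' d = 1 := by
  rw [← map_mul, mul_comm, map_mul]
  exact diagOp_mul_diagOp_inv h

theorem isUnit_diagOp {d : ℤ × ℤ → ℂ} (h : ∀ p ∈ tSupp l l', d p ≠ 0) :
    IsUnit (diagOp l l' d) :=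
  ⟨⟨_, _, diagOp_mul_diagOp_inv h, diagOp_inv_mul_diagOp h⟩, rfl⟩

theorem diagOp_commute (d d' : ℤ × ℤ → ℂ) : Commute (diagOp l l' d) (diagOp l l' d') :=
  (Commute.all d d').map _

theorem diagOp_mul_eq_mul_diagOp {A : Module.End ℂ (↥(tSupp l l') → ℂ)} {σ : ℤ × ℤ → ℤ × ℤ}
    {c : ℤ × ℤ → ℂ} (hA : ∀ p ∈ tSupp l l', A (tvec l l' p) = c p • tvec l l' (σ p))
    {d d' : ℤ × ℤ → ℂ} (hd : ∀ p, d (σ p) = d' p) :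
    diagOp l l' d * A = A * diagOp l l' d' :=
  ext_tvec fun p hp => by
    simp only [Module.End.mul_apply, diagOp_tvec, map_smul, hA p hp, hd, smul_smul, mul_comm]

end Diagonal

theorem mem_tSupp_iff {l l' : ℤ} {p : ℤ × ℤ} : p ∈ tSupp l l' ↔
    (-l ≤ p.1 ∧ p.1 ≤ l ∧ (l - p.1) % 2 = 0) ∧ (-l' ≤ p.2 ∧ p.2 ≤ l' ∧ (l' - p.2) % 2 = 0) := by
  simp [tSupp, mSupp, and_assoc]

theorem mSupp_induction {l m : ℤ} {P : ℤ → Prop} (hm : m ∈ mSupp l) (hP : P m)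
    (hup : ∀ n ∈ mSupp l, n + 2 ∈ mSupp l → P n → P (n + 2))
    (hdown : ∀ n ∈ mSupp l, n - 2 ∈ mSupp l → P n → P (n - 2)) : ∀ n ∈ mSupp l, P n := by
  suffices ∀ k : ℕ, ∀ n ∈ mSupp l, (n - m).natAbs = 2 * k → P n by
    intro n hn
    simp only [mSupp, Finset.mem_filter, Finset.mem_Icc] at hm hn
    exact this ((n - m).natAbs / 2) n (by simpa [mSupp] using hn) (by omega)
  intro k
  induction k with
  | zero => intro n _ h; rwa [show n = m by omega]
  | succ k ih =>
    intro n hn h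
    simp only [mSupp, Finset.mem_filter, Finset.mem_Icc] at hm hn ih hup hdown
    rcases lt_or_gt_of_ne (show n ≠ m by omega) with hlt | hgt
    · simpa using hdown (n + 2) ⟨by omega, by omega⟩ ⟨by omega, by omega⟩
        (ih (n + 2) ⟨by omega, by omega⟩ (by omega))
    · simpa using hup (n - 2) ⟨by omega, by omega⟩ ⟨by omega, by omega⟩
        (ih (n - 2) ⟨by omega, by omega⟩ (by omega))

/-- The eigenvalue `X + X⁻¹` of `q^j K1K2 + q^{−j} K1⁻¹K2⁻¹` on `tvec l l' (m, m')`, with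
`X = q^j (ε s^m) (ε' s^m')` written as a single power of `s = q^{1/2}`. -/
def eigP (s ε ε' : ℂ) (j : ℤ) (p : ℤ × ℤ) : ℂ :=
  ε * ε' * s ^ (2 * j + p.1 + p.2) + (ε * ε' * s ^ (2 * j + p.1 + p.2))⁻¹

/-- The eigenvalue of `q^j K1K2⁻¹ + q^{−j} K1⁻¹K2`, likewise. -/
def eigQ (s ε ε' : ℂ) (j : ℤ) (p : ℤ × ℤ) : ℂ :=
  ε * ε'⁻¹ * s ^ (2 * j + p.1 - p.2) + (ε * ε'⁻¹ * s ^ (2 * j + p.1 - p.2))⁻¹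

theorem sq_eq_one_or_neg_one_of_mem_fourthRoots {ε : ℂ}
    (hε : ε ∈ ({1, -1, Complex.I, -Complex.I} : Set ℂ)) : ε ^ 2 = 1 ∨ ε ^ 2 = -1 := by
  rcases hε with rfl | rfl | rfl | rfl | rfl <;> simp

theorem fSign_ne_zero (ε : ℂ) : fSign ε ≠ 0 := by
  unfold fSign; split_ifs <;> norm_num

theorem ne_zero_of_mem_fourthRoots {ε : ℂ}
    (hε : ε ∈ ({1, -1, Complex.I, -Complex.I} : Set ℂ)) : ε ≠ 0 := by
  rcases hε with rfl | rfl | rfl | rfl | rfl <;> simp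

theorem sq_mul_sq_eq_one_or {ε ε' : ℂ} {l l' : ℤ}
    (hε : ε ∈ ({1, -1, Complex.I, -Complex.I} : Set ℂ))
    (hε' : ε' ∈ ({1, -1, Complex.I, -Complex.I} : Set ℂ))
    (hcase : (ε ∈ ({1, -1} : Set ℂ) ∧ ε' ∈ ({1, -1} : Set ℂ)) ∨
             (ε ∈ ({Complex.I, -Complex.I} : Set ℂ) ∧ ε' ∈ ({Complex.I, -Complex.I} : Set ℂ)) ∨
             ¬ Even (l + l')) :
    ε ^ 2 * ε' ^ 2 = 1 ∨ (ε ^ 2 * ε' ^ 2 = -1 ∧ ¬ Even (l + l')) := by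
  rcases hcase with ⟨h, h'⟩ | ⟨h, h'⟩ | hodd
  · left
    rcases h with rfl | rfl <;> rcases h' with rfl | rfl <;> norm_num
  · left
    rcases h with rfl | rfl <;> rcases h' with rfl | rfl <;> norm_num
  · rcases sq_eq_one_or_neg_one_of_mem_fourthRoots hε with h | h <;>
      rcases sq_eq_one_or_neg_one_of_mem_fourthRoots hε' with h' | h' <;> simp [h, h', hodd]

namespace IsTensorRep

variable {q s : ℂ} {l l' : ℤ} {ε ε' : ℂ}
  {T : Uhat2 q →ₐ[ℂ] Module.End ℂ (↥(tSupp l l') → ℂ)} (hT : IsTensorRep q s l l' ε ε' T)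
include hT

theorem K0 : T (gen2 q (QG.K 0)) = diagOp l l' fun p => ε * s ^ p.1 :=
  ext_tvec fun p hp => by rw [diagOp_tvec]; exact (hT p.1 p.2 hp).1

theorem Ki0 : T (gen2 q (QG.Ki 0)) = diagOp l l' fun p => (ε * s ^ p.1)⁻¹ :=
  ext_tvec fun p hp => by rw [diagOp_tvec]; exact (hT p.1 p.2 hp).2.1

theorem x0 : T (gen2 q (QG.x 0)) = diagOp l l' fun _ => s ^ (-l) :=
  ext_tvec fun p hp => by rw [diagOp_tvec]; exact (hT p.1 p.2 hp).2.2.2.2.1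

theorem K1 : T (gen2 q (QG.K 1)) = diagOp l l' fun p => ε' * s ^ p.2 :=
  ext_tvec fun p hp => by rw [diagOp_tvec]; exact (hT p.1 p.2 hp).2.2.2.2.2.1

theorem Ki1 : T (gen2 q (QG.Ki 1)) = diagOp l l' fun p => (ε' * s ^ p.2)⁻¹ :=
  ext_tvec fun p hp => by rw [diagOp_tvec]; exact (hT p.1 p.2 hp).2.2.2.2.2.2.1

theorem x1 : T (gen2 q (QG.x 1)) = diagOp l l' fun _ => s ^ (-l') :=
  ext_tvec fun p hp => by rw [diagOp_tvec]; exact (hT p.1 p.2 hp).2.2.2.2.2.2.2.2.2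

theorem e0 : ∀ p ∈ tSupp l l',
    T (gen2 q (QG.e 0)) (tvec l l' p) = qNum q s (l - p.1) • tvec l l' (p.1 + 2, p.2) :=
  fun p hp => (hT p.1 p.2 hp).2.2.1

theorem f0 : ∀ p ∈ tSupp l l', T (gen2 q (QG.f 0)) (tvec l l' p) =
    (fSign ε * qNum q s (l + p.1)) • tvec l l' (p.1 - 2, p.2) :=
  fun p hp => (hT p.1 p.2 hp).2.2.2.1

theorem e1 : ∀ p ∈ tSupp l l',
    T (gen2 q (QG.e 1)) (tvec l l' p) = qNum q s (l' - p.2) • tvec l l' (p.1, p.2 + 2) :=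
  fun p hp => (hT p.1 p.2 hp).2.2.2.2.2.2.2.1

theorem f1 : ∀ p ∈ tSupp l l', T (gen2 q (QG.f 1)) (tvec l l' p) =
    (fSign ε' * qNum q s (l' + p.2)) • tvec l l' (p.1, p.2 - 2) :=
  fun p hp => (hT p.1 p.2 hp).2.2.2.2.2.2.2.2.1

theorem commute_diagOp {a : QG} (ha : ∃ i, a = QG.K i ∨ a = QG.Ki i ∨ a = QG.x i)
    (d : ℤ × ℤ → ℂ) : Commute (diagOp l l' d) (T (gen2 q a)) := by
  obtain ⟨i, rfl | rfl | rfl⟩ := ha <;> fin_cases i <;>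
    simp only [Fin.zero_eta, Fin.mk_one, hT.K0, hT.Ki0, hT.x0, hT.K1, hT.Ki1, hT.x1] <;>
    exact diagOp_commute _ _

theorem P2_eq (hq0 : q ≠ 0) (hs : s ^ 2 = q) (j : ℤ) :
    T (P2 q j) = diagOp l l' (eigP s ε ε' j) := by
  have hs0 := ne_zero_of_sq_eq hq0 hs
  rw [P2, map_add, map_smul, map_smul, map_mul, map_mul, hT.K0, hT.K1, hT.Ki0, hT.Ki1,
    ← map_mul, ← map_mul, ← map_smul, ← map_smul, ← map_add]
  congr 1; funext p
  simp only [eigP, Pi.add_apply, Pi.smul_apply, Pi.mul_apply, smul_eq_mul,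
    ← zpow_two_mul_of_sq_eq hs, mul_neg, zpow_neg, zpow_add₀ hs0]
  field_simp

theorem Q2_eq (hq0 : q ≠ 0) (hs : s ^ 2 = q) (j : ℤ) :
    T (Q2 q j) = diagOp l l' (eigQ s ε ε' j) := by
  have hs0 := ne_zero_of_sq_eq hq0 hs
  rw [Q2, map_add, map_smul, map_smul, map_mul, map_mul, hT.K0, hT.K1, hT.Ki0, hT.Ki1,
    ← map_mul, ← map_mul, ← map_smul, ← map_smul, ← map_add]
  congr 1; funext p
  simp only [eigQ, Pi.add_apply, Pi.smul_apply, Pi.mul_apply, smul_eq_mul,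
    ← zpow_two_mul_of_sq_eq hs, mul_neg, zpow_neg, zpow_add₀ hs0, zpow_sub₀ hs0]
  field_simp

end IsTensorRep

theorem eigP_ne_zero {q s ε ε' : ℂ} {l l' : ℤ} (hq0 : q ≠ 0)
    (hroot : ∀ n : ℕ, 1 ≤ n → q ^ n ≠ 1) (hs : s ^ 2 = q)
    (hεε' : ε ^ 2 * ε' ^ 2 = 1 ∨ (ε ^ 2 * ε' ^ 2 = -1 ∧ ¬ Even (l + l')))
    (j : ℤ) {p : ℤ × ℤ} (hp : p ∈ tSupp l l') : eigP s ε ε' j p ≠ 0 := by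
  refine mul_zpow_add_inv_ne_zero hq0 hroot hs ?_
  rw [mul_pow]
  refine hεε'.imp_right fun ⟨h, hodd⟩ => ⟨h, ?_⟩
  rw [mem_tSupp_iff] at hp
  rw [Int.odd_iff]; rw [Int.even_iff] at hodd; omega

theorem eigQ_ne_zero {q s ε ε' : ℂ} {l l' : ℤ} (hq0 : q ≠ 0)
    (hroot : ∀ n : ℕ, 1 ≤ n → q ^ n ≠ 1) (hs : s ^ 2 = q) (hε' : ε' ^ 2 = 1 ∨ ε' ^ 2 = -1)
    (hεε' : ε ^ 2 * ε' ^ 2 = 1 ∨ (ε ^ 2 * ε' ^ 2 = -1 ∧ ¬ Even (l + l')))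
    (j : ℤ) {p : ℤ × ℤ} (hp : p ∈ tSupp l l') : eigQ s ε ε' j p ≠ 0 := by
  refine mul_zpow_add_inv_ne_zero hq0 hroot hs ?_
  rw [mul_pow, inv_pow, show (ε' ^ 2)⁻¹ = ε' ^ 2 by rcases hε' with h | h <;> simp [h]]
  refine hεε'.imp_right fun ⟨h, hodd⟩ => ⟨h, ?_⟩
  rw [mem_tSupp_iff] at hp
  rw [Int.odd_iff]; rw [Int.even_iff] at hodd; omega

theorem BaseRel.exists_lift {q : ℂ} {X : Type} {g : QG → FreeAlgebra ℂ X}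
    {a b : FreeAlgebra ℂ X} (h : BaseRel q g a b) :
    ∃ a₀ b₀, BaseRel q (FreeAlgebra.ι ℂ) a₀ b₀ ∧
      FreeAlgebra.lift ℂ g a₀ = a ∧ FreeAlgebra.lift ℂ g b₀ = b := by
  cases h with
  | KKi i => exact ⟨_, _, .KKi i, by simp, by simp⟩
  | KiK i => exact ⟨_, _, .KiK i, by simp, by simp⟩
  | Ke i => exact ⟨_, _, .Ke i, by simp, by simp⟩
  | Kf i => exact ⟨_, _, .Kf i, by simp, by simp⟩
  | ef i => exact ⟨_, _, .ef i, by simp, by simp⟩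
  | xe i => exact ⟨_, _, .xe i, by simp, by simp⟩
  | xf i => exact ⟨_, _, .xf i, by simp, by simp⟩
  | xK i => exact ⟨_, _, .xK i, by simp, by simp⟩
  | xKi i => exact ⟨_, _, .xKi i, by simp, by simp⟩
  | quartic i => exact ⟨_, _, .quartic i, by simp [casFree], by simp⟩
  | cross a b ha hb => exact ⟨_, _, .cross a b ha hb, by simp, by simp⟩

section Extension

variable {q s : ℂ} {l l' : ℤ} {ε ε' : ℂ}

def extLift (s ε ε' : ℂ) (T : Uhat2 q →ₐ[ℂ] Module.End ℂ (↥(tSupp l l') → ℂ)) :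
    FreeAlgebra ℂ QGE →ₐ[ℂ] Module.End ℂ (↥(tSupp l l') → ℂ) :=
  FreeAlgebra.lift ℂ fun
    | .base a => T (gen2 q a)
    | .u j => diagOp l l' (eigP s ε ε' j)⁻¹
    | .v j => diagOp l l' (eigQ s ε ε' j)⁻¹

variable {T : Uhat2 q →ₐ[ℂ] Module.End ℂ (↥(tSupp l l') → ℂ)}

@[simp] theorem extLift_g (a : QG) : extLift s ε ε' T (ExtFree.g a) = T (gen2 q a) := by
  simp [extLift, ExtFree.g]

@[simp] theorem extLift_U (j : ℤ) :
    extLift s ε ε' T (ExtFree.U j) = diagOp l l' (eigP s ε ε' j)⁻¹ := by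
  simp [extLift, ExtFree.U]

@[simp] theorem extLift_V (j : ℤ) :
    extLift s ε ε' T (ExtFree.V j) = diagOp l l' (eigQ s ε ε' j)⁻¹ := by
  simp [extLift, ExtFree.V]

theorem extLift_comp_lift_g :
    (extLift s ε ε' T).comp (FreeAlgebra.lift ℂ ExtFree.g) =
      T.comp (RingQuot.mkAlgHom ℂ (BaseRel q (FreeAlgebra.ι ℂ))) :=
  FreeAlgebra.hom_ext (funext fun a => by simp [gen2])

theorem extLift_P (hq0 : q ≠ 0) (hs : s ^ 2 = q) (hT : IsTensorRep q s l l' ε ε' T) (j : ℤ) :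
    extLift s ε ε' T (ExtFree.P q j) = diagOp l l' (eigP s ε ε' j) := by
  rw [← hT.P2_eq hq0 hs, ExtFree.P, P2]; simp

theorem extLift_Q (hq0 : q ≠ 0) (hs : s ^ 2 = q) (hT : IsTensorRep q s l l' ε ε' T) (j : ℤ) :
    extLift s ε ε' T (ExtFree.Q q j) = diagOp l l' (eigQ s ε ε' j) := by
  rw [← hT.Q2_eq hq0 hs, ExtFree.Q, Q2]; simp

end Extension

theorem extLift_respects {q s ε ε' : ℂ} {l l' : ℤ}
    {T : Uhat2 q →ₐ[ℂ] Module.End ℂ (↥(tSupp l l') → ℂ)} (hq0 : q ≠ 0) (hs : s ^ 2 = q)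
    (hT : IsTensorRep q s l l' ε ε' T)
    (hP : ∀ j, ∀ p ∈ tSupp l l', eigP s ε ε' j p ≠ 0)
    (hQ : ∀ j, ∀ p ∈ tSupp l l', eigQ s ε ε' j p ≠ 0)
    {a b : FreeAlgebra ℂ QGE} (h : ExtRel q a b) : extLift s ε ε' T a = extLift s ε ε' T b := by
  cases h with
  | ofBase h =>
    obtain ⟨a₀, b₀, h₀, rfl, rfl⟩ := h.exists_lift
    rw [← AlgHom.comp_apply, ← AlgHom.comp_apply, extLift_comp_lift_g]
    exact congrArg T (RingQuot.mkAlgHom_rel ℂ h₀)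
  | uInvL j =>
    rw [map_mul, map_one, extLift_U, extLift_P hq0 hs hT]; exact diagOp_inv_mul_diagOp (hP j)
  | uInvR j =>
    rw [map_mul, map_one, extLift_U, extLift_P hq0 hs hT]; exact diagOp_mul_diagOp_inv (hP j)
  | vInvL j =>
    rw [map_mul, map_one, extLift_V, extLift_Q hq0 hs hT]; exact diagOp_inv_mul_diagOp (hQ j)
  | vInvR j =>
    rw [map_mul, map_one, extLift_V, extLift_Q hq0 hs hT]; exact diagOp_mul_diagOp_inv (hQ j)
  | uK j i => simpa using (hT.commute_diagOp ⟨i, .inl rfl⟩ _).eq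
  | uKi j i => simpa using (hT.commute_diagOp ⟨i, .inr (.inl rfl)⟩ _).eq
  | ux j i => simpa using (hT.commute_diagOp ⟨i, .inr (.inr rfl)⟩ _).eq
  | vK j i => simpa using (hT.commute_diagOp ⟨i, .inl rfl⟩ _).eq
  | vKi j i => simpa using (hT.commute_diagOp ⟨i, .inr (.inl rfl)⟩ _).eq
  | vx j i => simpa using (hT.commute_diagOp ⟨i, .inr (.inr rfl)⟩ _).eq
  | ue j i | uf j i | ve1 j | vf1 j | ve2 j | vf2 j =>
    simp only [map_mul, extLift_U, extLift_V, extLift_g]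
    all_goals try fin_cases i
    -- `e_i`, `f_i` shift the weights exactly as the relations shift `j`.
    all_goals first
      | exact diagOp_mul_eq_mul_diagOp hT.e0 fun p => by
          simp only [Pi.inv_apply, eigP, eigQ]; ring_nf
      | exact diagOp_mul_eq_mul_diagOp hT.f0 fun p => by
          simp only [Pi.inv_apply, eigP, eigQ]; ring_nf
      | exact diagOp_mul_eq_mul_diagOp hT.e1 fun p => by
          simp only [Pi.inv_apply, eigP, eigQ]; ring_nf
      | exact diagOp_mul_eq_mul_diagOp hT.f1 fun p => by
          simp only [Pi.inv_apply, eigP, eigQ]; ring_nf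

theorem tvec_mem_of_shift {l l' : ℤ} {W : Submodule ℂ (↥(tSupp l l') → ℂ)}
    {A : Module.End ℂ (↥(tSupp l l') → ℂ)} {σ : ℤ × ℤ → ℤ × ℤ} {c : ℤ × ℤ → ℂ}
    (hA : ∀ p ∈ tSupp l l', A (tvec l l' p) = c p • tvec l l' (σ p)) (hW : ∀ v ∈ W, A v ∈ W)
    {p : ℤ × ℤ} (hp : p ∈ tSupp l l') (hc : c p ≠ 0) (hv : tvec l l' p ∈ W) :
    tvec l l' (σ p) ∈ W :=
  (W.smul_mem_iff hc).1 (hA p hp ▸ hW _ hv)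

namespace IsTensorRep

variable {q s : ℂ} {l l' : ℤ} {ε ε' : ℂ}
  {T : Uhat2 q →ₐ[ℂ] Module.End ℂ (↥(tSupp l l') → ℂ)} {W : Submodule ℂ (↥(tSupp l l') → ℂ)}

theorem tvec_mem_of_invariant (hq0 : q ≠ 0) (hroot : ∀ n : ℕ, 1 ≤ n → q ^ n ≠ 1)
    (hs : s ^ 2 = q) (hT : IsTensorRep q s l l' ε ε' T)
    (hW : ∀ a, ∀ v ∈ W, T (gen2 q a) v ∈ W) {b : ℤ × ℤ} (hb : b ∈ tSupp l l')
    (hbW : tvec l l' b ∈ W) : ∀ p ∈ tSupp l l', tvec l l' p ∈ W := by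
  have hqNum : ∀ {a : ℤ}, a ≠ 0 → qNum q s a ≠ 0 := qNum_ne_zero hq0 hroot hs
  obtain ⟨hb₁, hb₂⟩ := Finset.mem_product.1 hb
  have row : ∀ n ∈ mSupp l, tvec l l' (n, b.2) ∈ W := by
    refine mSupp_induction (P := fun n => tvec l l' (n, b.2) ∈ W) hb₁ hbW ?_ ?_
    · intro n hn hn₂ hv
      refine tvec_mem_of_shift hT.e0 (hW _) (Finset.mk_mem_product hn hb₂) (hqNum ?_) hv
      simp [mSupp] at hn₂; omega
    · intro n hn hn₂ hv
      refine tvec_mem_of_shift hT.f0 (hW _) (Finset.mk_mem_product hn hb₂)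
        (mul_ne_zero (fSign_ne_zero _) (hqNum ?_)) hv
      simp [mSupp] at hn₂; omega
  rintro ⟨n, n'⟩ hp
  obtain ⟨hn, hn'⟩ := Finset.mem_product.1 hp
  refine mSupp_induction (P := fun n' => tvec l l' (n, n') ∈ W) hb₂ (row n hn) ?_ ?_ n' hn'
  · intro m hm hm₂ hv
    refine tvec_mem_of_shift hT.e1 (hW _) (Finset.mk_mem_product hn hm) (hqNum ?_) hv
    simp [mSupp] at hm₂; omega
  · intro m hm hm₂ hv
    refine tvec_mem_of_shift hT.f1 (hW _) (Finset.mk_mem_product hn hm)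
      (mul_ne_zero (fSign_ne_zero _) (hqNum ?_)) hv
    simp [mSupp] at hm₂; omega

theorem exists_tvec_mem (hq0 : q ≠ 0) (hroot : ∀ n : ℕ, 1 ≤ n → q ^ n ≠ 1) (hs : s ^ 2 = q)
    (hε : ε ≠ 0) (hε' : ε' ≠ 0) (hT : IsTensorRep q s l l' ε ε' T)
    (hW : ∀ a, ∀ v ∈ W, T (gen2 q a) v ∈ W) (hW0 : W ≠ ⊥) : ∃ p ∈ tSupp l l', tvec l l' p ∈ W := by
  obtain ⟨w, hw, hw0⟩ := W.ne_bot_iff.1 hW0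
  obtain ⟨b, hb⟩ := Function.ne_iff.1 hw0
  refine ⟨b, b.2, ?_⟩
  rw [tvec_coe]
  refine Submodule.single_mem_of_separating ![fun c => ε * s ^ c.1.1, fun c => ε' * s ^ c.1.2]
    (Fin.forall_fin_two.2 ⟨fun v hv => by simpa [hT.K0, diagOp_eq_mul] using hW (.K 0) v hv,
      fun v hv => by simpa [hT.K1, diagOp_eq_mul] using hW (.K 1) v hv⟩)
    (fun c c' hcc' => ?_) hw hb
  have hc := mem_tSupp_iff.1 c.2
  have hc' := mem_tSupp_iff.1 c'.2
  by_cases h₁ : c.1.1 = c'.1.1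
  · refine ⟨1, fun h => hcc' (Subtype.ext (Prod.ext h₁ ?_))⟩
    refine eq_of_zpow_eq_of_not_root hq0 hroot hs ?_ (mul_left_cancel₀ hε' h)
    rw [Int.even_iff]; omega
  · refine ⟨0, fun h => h₁ ?_⟩
    refine eq_of_zpow_eq_of_not_root hq0 hroot hs ?_ (mul_left_cancel₀ hε h)
    rw [Int.even_iff]; omega

theorem eq_bot_or_eq_top (hq0 : q ≠ 0) (hroot : ∀ n : ℕ, 1 ≤ n → q ^ n ≠ 1) (hs : s ^ 2 = q)
    (hε : ε ≠ 0) (hε' : ε' ≠ 0) (hT : IsTensorRep q s l l' ε ε' T)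
    (hW : ∀ a, ∀ v ∈ W, T (gen2 q a) v ∈ W) : W = ⊥ ∨ W = ⊤ :=
  or_iff_not_imp_left.2 fun hW0 =>
    let ⟨_, hp, hpW⟩ := hT.exists_tvec_mem hq0 hroot hs hε hε' hW hW0
    eq_top_of_tvec_mem (hT.tvec_mem_of_invariant hq0 hroot hs hW hp hpW)

end IsTensorRep

section UhatExt

variable {q : ℂ} {A : Type*} [Ring A] [Algebra ℂ A]

/-- `u_j` and `v_j` are forced: they are inverses of images of the `K_i^{±1}`. -/
theorem UhatExt.algHom_ext {F G : UhatExt q →ₐ[ℂ] A}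
    (h : ∀ a, F (genE q (.base a)) = G (genE q (.base a))) : F = G := by
  let mk := RingQuot.mkAlgHom ℂ (ExtRel q)
  have hg : ∀ a, F (mk (ExtFree.g a)) = G (mk (ExtFree.g a)) := h
  have hP : ∀ j, F (mk (ExtFree.P q j)) = G (mk (ExtFree.P q j)) := fun j => by
    simp only [ExtFree.P, map_add, map_smul, map_mul, hg]
  have hQ : ∀ j, F (mk (ExtFree.Q q j)) = G (mk (ExtFree.Q q j)) := fun j => by
    simp only [ExtFree.Q, map_add, map_smul, map_mul, hg]
  have rel : ∀ {a b}, ExtRel q a b → ∀ H : UhatExt q →ₐ[ℂ] A, H (mk a) = H (mk b) :=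
    fun r H => congrArg H (RingQuot.mkAlgHom_rel ℂ r)
  refine RingQuot.ringQuot_ext' ℂ F G (FreeAlgebra.hom_ext (funext fun x => ?_))
  cases x with
  | base a => exact hg a
  | u j =>
    show F (mk (ExtFree.U j)) = G (mk (ExtFree.U j))
    refine left_inv_eq_right_inv (a := F (mk (ExtFree.P q j))) ?_ ?_
    · simpa using rel (.uInvL j) F
    · simpa [hP] using rel (.uInvR j) G
  | v j =>
    show F (mk (ExtFree.V j)) = G (mk (ExtFree.V j))
    refine left_inv_eq_right_inv (a := F (mk (ExtFree.Q q j))) ?_ ?_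
    · simpa using rel (.vInvL j) F
    · simpa [hQ] using rel (.vInvR j) G

end UhatExt

theorem stmt_2_general (q s : ℂ) (hq0 : q ≠ 0)
    (hroot : ∀ n : ℕ, 1 ≤ n → q ^ n ≠ 1) (hs : s ^ 2 = q)
    (l l' : ℤ)
    (ε ε' : ℂ)
    (hε : ε ∈ ({1, -1, Complex.I, -Complex.I} : Set ℂ))
    (hε' : ε' ∈ ({1, -1, Complex.I, -Complex.I} : Set ℂ))
    (hcase : (ε ∈ ({1, -1} : Set ℂ) ∧ ε' ∈ ({1, -1} : Set ℂ)) ∨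
             (ε ∈ ({Complex.I, -Complex.I} : Set ℂ) ∧ ε' ∈ ({Complex.I, -Complex.I} : Set ℂ)) ∨
             ¬ Even (l + l'))
    (T : Uhat2 q →ₐ[ℂ] Module.End ℂ (↥(tSupp l l') → ℂ))
    (hT : IsTensorRep q s l l' ε ε' T) :
    (∀ j : ℤ, IsUnit (T (P2 q j)) ∧ IsUnit (T (Q2 q j))) ∧
    (∃! Text : UhatExt q →ₐ[ℂ] Module.End ℂ (↥(tSupp l l') → ℂ),
        (∀ a : QG, Text (genE q (QGE.base a)) = T (gen2 q a)) ∧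
        (∀ j : ℤ, Text (uE q j) * T (P2 q j) = 1 ∧ T (P2 q j) * Text (uE q j) = 1 ∧
                  Text (vE q j) * T (Q2 q j) = 1 ∧ T (Q2 q j) * Text (vE q j) = 1)) ∧
    (∀ Text : UhatExt q →ₐ[ℂ] Module.End ℂ (↥(tSupp l l') → ℂ),
        (∀ a : QG, Text (genE q (QGE.base a)) = T (gen2 q a)) →
        ∀ W : Submodule ℂ (↥(tSupp l l') → ℂ),
          (∀ a : UhatExt q, ∀ w ∈ W, Text a w ∈ W) → W = ⊥ ∨ W = ⊤) := by
  have hεε' := sq_mul_sq_eq_one_or hε hε' hcase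
  have hP j : ∀ p ∈ tSupp l l', eigP s ε ε' j p ≠ 0 :=
    fun _ => eigP_ne_zero hq0 hroot hs hεε' j
  have hQ j : ∀ p ∈ tSupp l l', eigQ s ε ε' j p ≠ 0 :=
    fun _ => eigQ_ne_zero hq0 hroot hs (sq_eq_one_or_neg_one_of_mem_fourthRoots hε') hεε' j
  let Text := RingQuot.liftAlgHom ℂ ⟨extLift s ε ε' T, fun _ _ => extLift_respects hq0 hs hT hP hQ⟩
  have hgen x : Text (genE q x) = extLift s ε ε' T (FreeAlgebra.ι ℂ x) :=
    RingQuot.liftAlgHom_mkAlgHom_apply ..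
  have hbase a : Text (genE q (.base a)) = T (gen2 q a) := (hgen _).trans (extLift_g a)
  refine ⟨fun j => ⟨hT.P2_eq hq0 hs j ▸ isUnit_diagOp (hP j),
      hT.Q2_eq hq0 hs j ▸ isUnit_diagOp (hQ j)⟩,
    ⟨Text, ⟨hbase, fun j => ?_⟩,
      fun Text' hText' => UhatExt.algHom_ext fun a => (hText'.1 a).trans (hbase a).symm⟩,
    fun Text' hbase W hW => hT.eq_bot_or_eq_top hq0 hroot hs (ne_zero_of_mem_fourthRoots hε)
      (ne_zero_of_mem_fourthRoots hε') fun a => hbase a ▸ hW _⟩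
  rw [show Text (uE q j) = _ from (hgen _).trans (extLift_U j),
    show Text (vE q j) = _ from (hgen _).trans (extLift_V j), hT.P2_eq hq0 hs, hT.Q2_eq hq0 hs]
  exact ⟨diagOp_inv_mul_diagOp (hP j), diagOp_mul_diagOp_inv (hP j),
    diagOp_inv_mul_diagOp (hQ j), diagOp_mul_diagOp_inv (hQ j)⟩

/-- Theorem 1: for `q` not a root of unity, `l, l' ≥ 0` and
`ε, ε' ∈ {1, −1, i, −i}` with either `ε, ε' ∈ {1,−1}`, or `ε, ε' ∈ {i,−i}`, or
`l + l' ∉ ℤ` (doubled sum odd), the operators representing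
`q^j K1K2 + q^{−j}K1⁻¹K2⁻¹` and `q^j K1K2⁻¹ + q^{−j}K1⁻¹K2` under
`T_l^{(ε)} ⊗ T_{l'}^{(ε')}` are invertible; the representation extends uniquely to a
representation of `Û_q(sl_2)^{⊗2,ext}` sending `u_j`, `v_j` to the corresponding
inverse operators, and every such extension is irreducible. -/
theorem stmt_2 (q s : ℂ) (hq0 : q ≠ 0) (hq1 : q ≠ 1) (hqm1 : q ≠ -1)
    (hroot : ∀ n : ℕ, 1 ≤ n → q ^ n ≠ 1) (hs : s ^ 2 = q)
    (l l' : ℤ) (hl : 0 ≤ l) (hl' : 0 ≤ l')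
    (ε ε' : ℂ)
    (hε : ε ∈ ({1, -1, Complex.I, -Complex.I} : Set ℂ))
    (hε' : ε' ∈ ({1, -1, Complex.I, -Complex.I} : Set ℂ))
    (hcase : (ε ∈ ({1, -1} : Set ℂ) ∧ ε' ∈ ({1, -1} : Set ℂ)) ∨
             (ε ∈ ({Complex.I, -Complex.I} : Set ℂ) ∧ ε' ∈ ({Complex.I, -Complex.I} : Set ℂ)) ∨
             ¬ Even (l + l'))
    (T : Uhat2 q →ₐ[ℂ] Module.End ℂ (↥(tSupp l l') → ℂ))
    (hT : IsTensorRep q s l l' ε ε' T) :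
    (∀ j : ℤ, IsUnit (T (P2 q j)) ∧ IsUnit (T (Q2 q j))) ∧
    (∃! Text : UhatExt q →ₐ[ℂ] Module.End ℂ (↥(tSupp l l') → ℂ),
        (∀ a : QG, Text (genE q (QGE.base a)) = T (gen2 q a)) ∧
        (∀ j : ℤ, Text (uE q j) * T (P2 q j) = 1 ∧ T (P2 q j) * Text (uE q j) = 1 ∧
                  Text (vE q j) * T (Q2 q j) = 1 ∧ T (Q2 q j) * Text (vE q j) = 1)) ∧
    (∀ Text : UhatExt q →ₐ[ℂ] Module.End ℂ (↥(tSupp l l') → ℂ),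
        (∀ a : QG, Text (genE q (QGE.base a)) = T (gen2 q a)) →
        ∀ W : Submodule ℂ (↥(tSupp l l') → ℂ),
          (∀ a : UhatExt q, ∀ w ∈ W, Text a w ∈ W) → W = ⊥ ∨ W = ⊤) :=
  stmt_2_general q s hq0 hroot hs l l' ε ε' hε hε' hcase T hT
end
end

section
/- If q is not a root of unity, then the nonclassical-type representations R^{(ε1,ε2,ε3)}_{jj'} of U'_q(so_4) with j ≥ j' are pairwise nonequivalent: if (j,j',ε1,ε2,ε3) ≠ (s,s',ε1',ε2',ε3') with j ≥ j' and s ≥ s' (both admissible), then R^{(ε1,ε2,ε3)}_{jj'} and R^{(ε1',ε2',ε3')}_{ss'} are not intertwined by any linear isomorphism. -/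
noncomputable section

open Classical

/-- Generators of `U'_q(so_4)`. -/
inductive SO4Gen : Type
  | g21 | g32 | g43

open FreeAlgebra in
/-- Defining relations of `U'_q(so_4)`. -/
inductive SO4Rel (q : ℂ) : FreeAlgebra ℂ SO4Gen → FreeAlgebra ℂ SO4Gen → Prop
  | r1 : SO4Rel q
      (ι ℂ SO4Gen.g21 * (ι ℂ SO4Gen.g32)^2 - (q + q⁻¹) • (ι ℂ SO4Gen.g32 * ι ℂ SO4Gen.g21 * ι ℂ SO4Gen.g32)
        + (ι ℂ SO4Gen.g32)^2 * ι ℂ SO4Gen.g21) (-(ι ℂ SO4Gen.g21))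
  | r2 : SO4Rel q
      (ι ℂ SO4Gen.g32 * (ι ℂ SO4Gen.g21)^2 - (q + q⁻¹) • (ι ℂ SO4Gen.g21 * ι ℂ SO4Gen.g32 * ι ℂ SO4Gen.g21)
        + (ι ℂ SO4Gen.g21)^2 * ι ℂ SO4Gen.g32) (-(ι ℂ SO4Gen.g32))
  | r3 : SO4Rel q
      (ι ℂ SO4Gen.g32 * (ι ℂ SO4Gen.g43)^2 - (q + q⁻¹) • (ι ℂ SO4Gen.g43 * ι ℂ SO4Gen.g32 * ι ℂ SO4Gen.g43)
        + (ι ℂ SO4Gen.g43)^2 * ι ℂ SO4Gen.g32) (-(ι ℂ SO4Gen.g32))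
  | r4 : SO4Rel q
      (ι ℂ SO4Gen.g43 * (ι ℂ SO4Gen.g32)^2 - (q + q⁻¹) • (ι ℂ SO4Gen.g32 * ι ℂ SO4Gen.g43 * ι ℂ SO4Gen.g32)
        + (ι ℂ SO4Gen.g32)^2 * ι ℂ SO4Gen.g43) (-(ι ℂ SO4Gen.g43))
  | r5 : SO4Rel q (ι ℂ SO4Gen.g21 * ι ℂ SO4Gen.g43) (ι ℂ SO4Gen.g43 * ι ℂ SO4Gen.g21)

/-- The algebra `U'_q(so_4)`. -/
abbrev UqSO4 (q : ℂ) : Type := RingQuot (SO4Rel q)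

/-- The generator `I_21` of `U'_q(so_4)`. -/
def J21 (q : ℂ) : UqSO4 q := RingQuot.mkAlgHom ℂ (SO4Rel q) (FreeAlgebra.ι ℂ SO4Gen.g21)
/-- The generator `I_32` of `U'_q(so_4)`. -/
def J32 (q : ℂ) : UqSO4 q := RingQuot.mkAlgHom ℂ (SO4Rel q) (FreeAlgebra.ι ℂ SO4Gen.g32)
/-- The generator `I_43` of `U'_q(so_4)`. -/
def J43 (q : ℂ) : UqSO4 q := RingQuot.mkAlgHom ℂ (SO4Rel q) (FreeAlgebra.ι ℂ SO4Gen.g43)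

/-- q-commutator `[a,b]_q = q^{1/2} a b - q^{-1/2} b a`, where `s = q^{1/2}`. -/
def qbr {A : Type} [Ring A] [Algebra ℂ A] (s : ℂ) (a b : A) : A := s • (a * b) - s⁻¹ • (b * a)

/-- q-commutator `[a,b]_{q⁻¹} = q^{-1/2} a b - q^{1/2} b a`, where `s = q^{1/2}`. -/
def qbrInv {A : Type} [Ring A] [Algebra ℂ A] (s : ℂ) (a b : A) : A := s⁻¹ • (a * b) - s • (b * a)

def J31 (q s : ℂ) : UqSO4 q := qbr s (J21 q) (J32 q)
def J42 (q s : ℂ) : UqSO4 q := qbr s (J32 q) (J43 q)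
def J41 (q s : ℂ) : UqSO4 q := qbr s (J31 q s) (J43 q)
def J31m (q s : ℂ) : UqSO4 q := qbrInv s (J21 q) (J32 q)
def J42m (q s : ℂ) : UqSO4 q := qbrInv s (J32 q) (J43 q)
def J41m (q s : ℂ) : UqSO4 q := qbrInv s (J31 q s) (J43 q)

/-- The Casimir element `C_4`. -/
def C4 (q s : ℂ) : UqSO4 q :=
  q⁻¹ • (J21 q * J43 q) - J31 q s * J42 q s + q • (J32 q * J41 q s)

/-- The Casimir element `C'_4`. -/
def C4' (q s : ℂ) : UqSO4 q :=
  (q⁻¹)^2 • (J21 q)^2 + (J32 q)^2 + q^2 • (J43 q)^2 + q⁻¹ • (J31 q s * J31m q s)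
    + q • (J42 q s * J42m q s) + J41 q s * J41m q s

/-- The "plus" q-number `[a]_+` for the half-integer `a/2` (doubled argument). -/
def qNumP (q s : ℂ) (a : ℤ) : ℂ := (s ^ a + s ^ (-a)) / (q - q⁻¹)

/-- Basis "delta" vector of the function space on a finite index set `S ⊆ ℤ × ℤ`;
for `p ∉ S` this is the zero vector (out-of-range basis vectors are `0`). -/
def bvec (S : Finset (ℤ × ℤ)) (p : ℤ × ℤ) : (↥S → ℂ) :=
  fun b => if (b : ℤ × ℤ) = p then 1 else 0

/-- Index set `{(k,l) : |k| ≤ j, k ≡ j, |l| ≤ j', l ≡ j'}` for the classical-type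
representation `R_{jj'}` (all indices are doubled half-integers). -/
def clSupp (j j' : ℤ) : Finset (ℤ × ℤ) :=
  ((Finset.Icc (-j) j) ×ˢ (Finset.Icc (-j') j')).filter
    (fun p => (j - p.1) % 2 = 0 ∧ (j' - p.2) % 2 = 0)

/-- Index set for the nonclassical-type representations (doubled half-integers):
`k ∈ {1/2, …, j}`, `l ∈ {−j', …, j'}` if `j` is half-integral, and
`k ∈ {−j, …, j}`, `l ∈ {1/2, …, j'}` if `j'` is half-integral. -/
def nclSupp (j j' : ℤ) : Finset (ℤ × ℤ) :=
  if j % 2 = 1 then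
    ((Finset.Icc 1 j) ×ˢ (Finset.Icc (-j') j')).filter
      (fun p => p.1 % 2 = 1 ∧ p.2 % 2 = 0)
  else
    ((Finset.Icc (-j) j) ×ˢ (Finset.Icc 1 j')).filter
      (fun p => p.1 % 2 = 0 ∧ p.2 % 2 = 1)

/-- Admissibility of the parameters `(j, j')` for the nonclassical-type representations:
one of them is half-integral and the other is integral (doubled convention: one is odd and
one is even), `j ≥ 0`, `j' ≥ 0`. -/
def Adm (j j' : ℤ) : Prop :=
  (j % 2 = 1 ∧ j' % 2 = 0 ∧ 1 ≤ j ∧ 0 ≤ j') ∨ (j % 2 = 0 ∧ j' % 2 = 1 ∧ 0 ≤ j ∧ 1 ≤ j')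

/-- The formulas (31)–(33) for the classical-type representation `R_{jj'}` of
`U'_q(so_4)` (all indices doubled: `|k,l⟩` is `bvec (clSupp j j') (k, l)`). -/
def IsClRep (q s : ℂ) (j j' : ℤ)
    (R : UqSO4 q →ₐ[ℂ] Module.End ℂ (↥(clSupp j j') → ℂ)) : Prop :=
  ∀ k l : ℤ, (k, l) ∈ clSupp j j' →
    R (J21 q) (bvec (clSupp j j') (k, l)) =
      (Complex.I * qNum q s (k + l)) • bvec (clSupp j j') (k, l) ∧
    R (J43 q) (bvec (clSupp j j') (k, l)) =
      (Complex.I * qNum q s (k - l)) • bvec (clSupp j j') (k, l) ∧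
    R (J32 q) (bvec (clSupp j j') (k, l)) =
      ((s ^ (k + l) + s ^ (-(k + l))) * (s ^ (k - l) + s ^ (-(k - l))))⁻¹ •
        ( (-((s ^ (j - l) + s ^ (-(j - l))) * qNum q s (j' - l))) • bvec (clSupp j j') (k, l + 2)
        + ((s ^ (j + l) + s ^ (-(j + l))) * qNum q s (j' + l)) • bvec (clSupp j j') (k, l - 2)
        + ((s ^ (j' - k) + s ^ (-(j' - k))) * qNum q s (j - k)) • bvec (clSupp j j') (k + 2, l)
        - ((s ^ (j' + k) + s ^ (-(j' + k))) * qNum q s (j + k)) • bvec (clSupp j j') (k - 2, l))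

/-- The formulas (50)–(54) for the nonclassical-type representation
`R^{(ε1,ε2,ε3)}_{jj'}` of `U'_q(so_4)` (all indices doubled: `|k,l⟩` is
`bvec (nclSupp j j') (k, l)`; `(−1)^l` is `(−1)^(l/2)` for the doubled `l`). -/
def IsNclRep (q s ε1 ε2 ε3 : ℂ) (j j' : ℤ)
    (R : UqSO4 q →ₐ[ℂ] Module.End ℂ (↥(nclSupp j j') → ℂ)) : Prop :=
  (∀ k l : ℤ, (k, l) ∈ nclSupp j j' →
      R (J21 q) (bvec (nclSupp j j') (k, l)) =
        (ε1 * qNumP q s (k + l)) • bvec (nclSupp j j') (k, l) ∧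
      R (J43 q) (bvec (nclSupp j j') (k, l)) =
        (ε2 * qNumP q s (k - l)) • bvec (nclSupp j j') (k, l)) ∧
  (∀ k l : ℤ, (k, l) ∈ nclSupp j j' → k ≠ 1 → l ≠ 1 →
      R (J32 q) (bvec (nclSupp j j') (k, l)) =
        (qNum q s (k + l) * qNum q s (k - l) * (q - q⁻¹))⁻¹ •
          ( (-(Complex.I * (qNum q s (j' - l) * qNum q s (j - l)))) • bvec (nclSupp j j') (k, l + 2)
          + (Complex.I * (qNum q s (j' + l) * qNum q s (j + l))) • bvec (nclSupp j j') (k, l - 2)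
          + (-(Complex.I * (qNum q s (j' - k) * qNum q s (j - k)))) • bvec (nclSupp j j') (k + 2, l)
          + (Complex.I * (qNum q s (j' + k) * qNum q s (j + k))) • bvec (nclSupp j j') (k - 2, l))) ∧
  (j % 2 = 1 → ∀ l : ℤ, (1, l) ∈ nclSupp j j' →
      R (J32 q) (bvec (nclSupp j j') (1, l)) =
        (qNum q s (l + 1) * qNum q s (l - 1) * (q - q⁻¹))⁻¹ •
          ( (-(Complex.I * (qNum q s (j - l) * qNum q s (j' - l)))) • bvec (nclSupp j j') (1, l + 2)
          + (Complex.I * (qNum q s (j + l) * qNum q s (j' + l))) • bvec (nclSupp j j') (1, l - 2)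
          + (-(Complex.I * (qNum q s (j' - 1) * qNum q s (j - 1)))) • bvec (nclSupp j j') (3, l)
          + (Complex.I * (qNum q s (j' + 1) * qNum q s (j + 1)) * ε3 * (-1 : ℂ) ^ (l / 2)) •
              bvec (nclSupp j j') (1, -l))) ∧
  (j' % 2 = 1 → ∀ k : ℤ, (k, 1) ∈ nclSupp j j' →
      R (J32 q) (bvec (nclSupp j j') (k, 1)) =
        (qNum q s (k + 1) * qNum q s (k - 1) * (q - q⁻¹))⁻¹ •
          ( (-(Complex.I * (qNum q s (j - 1) * qNum q s (j' - 1)))) • bvec (nclSupp j j') (k, 3)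
          + (Complex.I * (qNum q s (j + 1) * qNum q s (j' + 1)) * ε3 * (-1 : ℂ) ^ (k / 2)) •
              bvec (nclSupp j j') (-k, 1)
          + (-(Complex.I * (qNum q s (j' - k) * qNum q s (j - k)))) • bvec (nclSupp j j') (k + 2, 1)
          + (Complex.I * (qNum q s (j' + k) * qNum q s (j + k))) • bvec (nclSupp j j') (k - 2, 1)))


/-!
An isomorphism intertwining two representations maps joint eigenvectors of the commuting
operators `I21`, `I43` to joint eigenvectors. In `R^{(ε1,ε2,ε3)}_{jj'}` both are diagonal, with
eigenvalues `ε1 [k+l]_+` and `ε2 [k-l]_+` on `|k, l⟩`, and as `q^{1/2}` is not a root of unity,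
`ε [a]_+ = ε' [b]_+` forces `ε = ε'` and `a = ±b`. Matching the top weight `(j, j')` of each
representation with a weight of the other gives `ε1 = ε1'`, `ε2 = ε2'`, `j + j' = s + s'` and
`|j - j'| = |s - s'|`, hence `(j, j') = (s, s')` once `j ≥ j'` and `s ≥ s'`. Finally the trace
of `I32` is invariant under conjugation, and the only diagonal contribution to it is the
`ε3`-term of the action on `|1/2, 0⟩` (resp. `|0, 1/2⟩`), so the trace is a nonzero multiple
of `ε3`.
-/

theorem zpow_eq_one_iff_of_not_isOfFinOrder {G : Type*} [DivisionMonoid G] {x : G}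
    (hx : ¬IsOfFinOrder x) {m : ℤ} : x ^ m = 1 ↔ m = 0 := by
  refine ⟨fun h => ?_, fun h => by rw [h, zpow_zero]⟩
  have hn : x ^ m.natAbs = 1 := by
    rcases Int.natAbs_eq m with hm | hm <;> rw [hm] at h
    · exact_mod_cast h
    · rwa [zpow_neg, inv_eq_one, zpow_natCast] at h
  by_contra hm
  exact hx (isOfFinOrder_iff_pow_eq_one.mpr ⟨m.natAbs, Int.natAbs_pos.mpr hm, hn⟩)

section NotIsOfFinOrder

variable {K : Type*} [Field K] {x : K}

theorem zpow_ne_neg_one_of_not_isOfFinOrder [CharZero K] (hx : ¬IsOfFinOrder x) (m : ℤ) :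
    x ^ m ≠ -1 := by
  intro h
  have h2 : x ^ (2 * m) = 1 := by rw [mul_comm, zpow_mul, h]; norm_num
  rw [zpow_eq_one_iff_of_not_isOfFinOrder hx] at h2
  obtain rfl : m = 0 := by omega
  norm_num at h

theorem zpow_sub_zpow_neg_ne_zero (hx0 : x ≠ 0) (hx : ¬IsOfFinOrder x) {a : ℤ} (ha : a ≠ 0) :
    x ^ a - x ^ (-a) ≠ 0 := by
  intro h
  have h2 : x ^ (2 * a) = 1 := by
    rw [two_mul, zpow_add₀ hx0]
    nth_rewrite 2 [sub_eq_zero.mp h]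
    rw [← zpow_add₀ hx0, add_neg_cancel, zpow_zero]
  rw [zpow_eq_one_iff_of_not_isOfFinOrder hx] at h2
  omega

theorem zpow_sub_eq_or_zpow_add_eq (hx0 : x ≠ 0) {c : K} (hc : c ^ 2 = 1) {a b : ℤ}
    (h : x ^ a + x ^ (-a) = c * (x ^ b + x ^ (-b))) : x ^ (a - b) = c ∨ x ^ (a + b) = c := by
  have hb : x ^ b ≠ 0 := zpow_ne_zero b hx0
  rw [zpow_neg, zpow_neg] at h
  field_simp at h
  have hfac : (x ^ a - c * x ^ b) * (x ^ a * x ^ b - c) = 0 := by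
    linear_combination h + x ^ b * hc
  rw [zpow_sub₀ hx0, zpow_add₀ hx0, div_eq_iff hb]
  rcases mul_eq_zero.mp hfac with h' | h'
  · exact .inl (by linear_combination h')
  · exact .inr (by linear_combination h')

theorem sign_eq_of_mul_zpow_add_zpow_neg_eq [CharZero K] (hx0 : x ≠ 0) (hx : ¬IsOfFinOrder x)
    {ε ε' : K} (hε : ε ^ 2 = 1) (hε' : ε' ^ 2 = 1) {a b : ℤ}
    (h : ε * (x ^ a + x ^ (-a)) = ε' * (x ^ b + x ^ (-b))) : ε = ε' ∧ (a = b ∨ a = -b) := by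
  have hc : (ε * ε') ^ 2 = 1 := by rw [mul_pow, hε, hε', one_mul]
  obtain ⟨m, hm, hab⟩ : ∃ m, x ^ m = ε * ε' ∧ (m = a - b ∨ m = a + b) := by
    rcases zpow_sub_eq_or_zpow_add_eq (a := a) (b := b) hx0 hc
      (by linear_combination ε * h - (x ^ a + x ^ (-a)) * hε) with h' | h'
    exacts [⟨_, h', .inl rfl⟩, ⟨_, h', .inr rfl⟩]
  have hc1 : ε * ε' = 1 :=
    (sq_eq_one_iff.mp hc).resolve_right (hm ▸ zpow_ne_neg_one_of_not_isOfFinOrder hx m)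
  refine ⟨by linear_combination ε' * hε - ε * hc1, ?_⟩
  rw [hc1, zpow_eq_one_iff_of_not_isOfFinOrder hx] at hm
  omega

end NotIsOfFinOrder

section QNumbers

variable {x : ℂ}

theorem sq_sub_inv_sq_ne_zero (hx0 : x ≠ 0) (hx : ¬IsOfFinOrder x) :
    x ^ 2 - (x ^ 2)⁻¹ ≠ 0 := by
  have := zpow_sub_zpow_neg_ne_zero hx0 hx (a := 2) two_ne_zero
  simpa [zpow_neg] using this

theorem qNum_ne_zero_s9 (hx0 : x ≠ 0) (hx : ¬IsOfFinOrder x) {a : ℤ} (ha : a ≠ 0) :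
    qNum (x ^ 2) x a ≠ 0 :=
  div_ne_zero (zpow_sub_zpow_neg_ne_zero hx0 hx ha) (sq_sub_inv_sq_ne_zero hx0 hx)

theorem sign_eq_of_mul_qNumP_eq (hx0 : x ≠ 0) (hx : ¬IsOfFinOrder x)
    {ε ε' : ℂ} (hε : ε ^ 2 = 1) (hε' : ε' ^ 2 = 1) {a b : ℤ}
    (h : ε * qNumP (x ^ 2) x a = ε' * qNumP (x ^ 2) x b) : ε = ε' ∧ (a = b ∨ a = -b) := by
  unfold qNumP at h
  rw [mul_div_assoc', mul_div_assoc', div_left_inj' (sq_sub_inv_sq_ne_zero hx0 hx)] at h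
  exact sign_eq_of_mul_zpow_add_zpow_neg_eq hx0 hx hε hε' h

end QNumbers

section DiagonalOperators

variable {S : Finset (ℤ × ℤ)}

theorem bvec_coe (b : S) : bvec S b = Pi.single b 1 := by
  ext c
  simp only [bvec, Pi.single_apply, ← Subtype.ext_iff]

theorem apply_apply_of_diagonal {T : Module.End ℂ (S → ℂ)} {lam : ℤ × ℤ → ℂ}
    (hT : ∀ p ∈ S, T (bvec S p) = lam p • bvec S p) (v : S → ℂ) (b : S) :
    T v b = lam b * v b := by
  have hdiag : T = Matrix.toLin' (Matrix.diagonal fun c : S => lam c) := by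
    refine (Pi.basisFun ℂ S).ext fun c => ?_
    rw [Pi.basisFun_apply, ← bvec_coe, hT c c.2, Matrix.toLin'_apply, bvec_coe,
      Matrix.mulVec_single_one]
    ext d
    rcases eq_or_ne c d with rfl | h
    · simp
    · simp [h.symm]
  rw [hdiag, Matrix.toLin'_apply, Matrix.mulVec_diagonal]

theorem eigenvalue_eq_of_diagonal {T : Module.End ℂ (S → ℂ)} {lam : ℤ × ℤ → ℂ}
    (hT : ∀ p ∈ S, T (bvec S p) = lam p • bvec S p) {v : S → ℂ} {μ : ℂ}
    (hv : T v = μ • v) {b : S} (hb : v b ≠ 0) : μ = lam b :=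
  mul_right_cancel₀ hb (by rw [← apply_apply_of_diagonal hT, hv, Pi.smul_apply, smul_eq_mul])

theorem trace_eq_sum_bvec (T : Module.End ℂ (S → ℂ)) :
    LinearMap.trace ℂ _ T = ∑ b : S, T (bvec S b) b := by
  rw [LinearMap.trace_eq_matrix_trace ℂ (Pi.basisFun ℂ S), LinearMap.toMatrix_eq_toMatrix',
    Matrix.trace]
  simp [LinearMap.toMatrix'_apply, bvec_coe]

end DiagonalOperators

theorem mem_nclSupp {j j' k l : ℤ} :
    (k, l) ∈ nclSupp j j' ↔
    (j % 2 = 1 ∧ 1 ≤ k ∧ k ≤ j ∧ -j' ≤ l ∧ l ≤ j' ∧ k % 2 = 1 ∧ l % 2 = 0) ∨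
    (j % 2 ≠ 1 ∧ -j ≤ k ∧ k ≤ j ∧ 1 ≤ l ∧ l ≤ j' ∧ k % 2 = 0 ∧ l % 2 = 1) := by
  unfold nclSupp
  split_ifs <;> simp only [Finset.mem_filter, Finset.mem_product, Finset.mem_Icc] <;> omega

theorem mk_mem_nclSupp_self {j j' : ℤ} (hadm : Adm j j') : (j, j') ∈ nclSupp j j' := by
  rw [mem_nclSupp]; unfold Adm at hadm; omega

section Intertwiners

variable {x ε1 ε2 ε3 ε1' ε2' ε3' : ℂ} {j j' s s' : ℤ}
  {R : UqSO4 (x ^ 2) →ₐ[ℂ] Module.End ℂ (↥(nclSupp j j') → ℂ)}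
  {R' : UqSO4 (x ^ 2) →ₐ[ℂ] Module.End ℂ (↥(nclSupp s s') → ℂ)}

theorem signs_eq_and_exists_weight_of_intertwines (hx0 : x ≠ 0)
    (hx : ¬IsOfFinOrder x) (hadm : Adm j j')
    (hε1 : ε1 = 1 ∨ ε1 = -1) (hε2 : ε2 = 1 ∨ ε2 = -1)
    (hε1' : ε1' = 1 ∨ ε1' = -1) (hε2' : ε2' = 1 ∨ ε2' = -1)
    (hR : IsNclRep (x ^ 2) x ε1 ε2 ε3 j j' R) (hR' : IsNclRep (x ^ 2) x ε1' ε2' ε3' s s' R')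
    (L : (↥(nclSupp j j') → ℂ) ≃ₗ[ℂ] (↥(nclSupp s s') → ℂ))
    (hL : ∀ (a : UqSO4 (x ^ 2)) (v : ↥(nclSupp j j') → ℂ), L (R a v) = R' a (L v)) :
    ε1 = ε1' ∧ ε2 = ε2' ∧ ∃ k l : ℤ, (k, l) ∈ nclSupp s s' ∧
      (j + j' = k + l ∨ j + j' = -(k + l)) ∧ (j - j' = k - l ∨ j - j' = -(k - l)) := by
  have hmem := mk_mem_nclSupp_self hadm
  set v := bvec (nclSupp j j') (j, j')
  have hv : v ≠ 0 := fun h => by simpa [v, bvec] using congrFun h ⟨(j, j'), hmem⟩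
  obtain ⟨b, hb⟩ : ∃ b, L v b ≠ 0 := Function.ne_iff.mp (L.map_ne_zero_iff.mpr hv)
  have e21 := eigenvalue_eq_of_diagonal (fun p hp => (hR'.1 p.1 p.2 hp).1)
    (by rw [← hL, (hR.1 j j' hmem).1, map_smul]) hb
  have e43 := eigenvalue_eq_of_diagonal (fun p hp => (hR'.1 p.1 p.2 hp).2)
    (by rw [← hL, (hR.1 j j' hmem).2, map_smul]) hb
  obtain ⟨rfl, h21⟩ :=
    sign_eq_of_mul_qNumP_eq hx0 hx (sq_eq_one_iff.mpr hε1) (sq_eq_one_iff.mpr hε1') e21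
  obtain ⟨rfl, h43⟩ :=
    sign_eq_of_mul_qNumP_eq hx0 hx (sq_eq_one_iff.mpr hε2) (sq_eq_one_iff.mpr hε2') e43
  exact ⟨rfl, rfl, b.1.1, b.1.2, b.2, h21, h43⟩

end Intertwiners

section TraceOfI32

variable {q sq ε1 ε2 ε3 : ℂ} {j j' : ℤ}
  {R : UqSO4 q →ₐ[ℂ] Module.End ℂ (↥(nclSupp j j') → ℂ)}

theorem J32_apply_bvec_self_of_ne_one (hR : IsNclRep q sq ε1 ε2 ε3 j j' R) {k l : ℤ}
    (hmem : (k, l) ∈ nclSupp j j') (hk : k ≠ 1) (hl : l ≠ 1) :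
    R (J32 q) (bvec _ (k, l)) ⟨(k, l), hmem⟩ = 0 := by
  rw [hR.2.1 k l hmem hk hl]
  simp only [Pi.smul_apply, Pi.add_apply, smul_eq_mul, bvec, Prod.mk.injEq, true_and, and_true]
  split_ifs <;> first | omega | ring

theorem J32_apply_bvec_self_of_odd_left (hR : IsNclRep q sq ε1 ε2 ε3 j j' R) (hj : j % 2 = 1)
    {l : ℤ} (hmem : (1, l) ∈ nclSupp j j') :
    R (J32 q) (bvec _ (1, l)) ⟨(1, l), hmem⟩ = if l = 0 then
      (qNum q sq 1 * qNum q sq (-1) * (q - q⁻¹))⁻¹ *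
        (Complex.I * (qNum q sq (j' + 1) * qNum q sq (j + 1))) * ε3 else 0 := by
  rw [hR.2.2.1 hj l hmem]
  simp only [Pi.smul_apply, Pi.add_apply, smul_eq_mul, bvec, Prod.mk.injEq, true_and, and_true]
  split_ifs <;> first | omega | ring1 | (subst_vars; norm_num; ring1)

theorem J32_apply_bvec_self_of_odd_right (hR : IsNclRep q sq ε1 ε2 ε3 j j' R) (hj' : j' % 2 = 1)
    {k : ℤ} (hmem : (k, 1) ∈ nclSupp j j') :
    R (J32 q) (bvec _ (k, 1)) ⟨(k, 1), hmem⟩ = if k = 0 then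
      (qNum q sq 1 * qNum q sq (-1) * (q - q⁻¹))⁻¹ *
        (Complex.I * (qNum q sq (j' + 1) * qNum q sq (j + 1))) * ε3 else 0 := by
  rw [hR.2.2.2 hj' k hmem]
  simp only [Pi.smul_apply, Pi.add_apply, smul_eq_mul, bvec, Prod.mk.injEq, true_and, and_true]
  split_ifs <;> first | omega | ring1 | (subst_vars; norm_num; ring1)

theorem trace_J32 (hR : IsNclRep q sq ε1 ε2 ε3 j j' R) (hadm : Adm j j') :
    LinearMap.trace ℂ _ (R (J32 q)) =
      (qNum q sq 1 * qNum q sq (-1) * (q - q⁻¹))⁻¹ *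
        (Complex.I * (qNum q sq (j' + 1) * qNum q sq (j + 1))) * ε3 := by
  rw [trace_eq_sum_bvec]
  rcases hadm with ⟨hj, hj', hj1, hj'0⟩ | ⟨hj, hj', hj0, hj'1⟩
  · have h10 : ((1 : ℤ), (0 : ℤ)) ∈ nclSupp j j' := by rw [mem_nclSupp]; omega
    rw [Finset.sum_eq_single_of_mem ⟨_, h10⟩ (Finset.mem_univ _)]
    · exact (J32_apply_bvec_self_of_odd_left hR hj h10).trans (if_pos rfl)
    rintro ⟨⟨k, l⟩, hmem⟩ - hne
    have hl : l % 2 = 0 := by rw [mem_nclSupp] at hmem; omega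
    rcases eq_or_ne k 1 with rfl | hk
    · rw [J32_apply_bvec_self_of_odd_left hR hj hmem, if_neg]
      rintro rfl
      exact hne rfl
    · exact J32_apply_bvec_self_of_ne_one hR hmem hk (by omega)
  · have h01 : ((0 : ℤ), (1 : ℤ)) ∈ nclSupp j j' := by rw [mem_nclSupp]; omega
    rw [Finset.sum_eq_single_of_mem ⟨_, h01⟩ (Finset.mem_univ _)]
    · exact (J32_apply_bvec_self_of_odd_right hR hj' h01).trans (if_pos rfl)
    rintro ⟨⟨k, l⟩, hmem⟩ - hne
    have hk : k % 2 = 0 := by rw [mem_nclSupp] at hmem; omega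
    rcases eq_or_ne l 1 with rfl | hl
    · rw [J32_apply_bvec_self_of_odd_right hR hj' hmem, if_neg]
      rintro rfl
      exact hne rfl
    · exact J32_apply_bvec_self_of_ne_one hR hmem (by omega) hl

end TraceOfI32

theorem eps3_eq_of_intertwines {x ε1 ε2 ε3 ε3' : ℂ} {j j' : ℤ}
    {R R' : UqSO4 (x ^ 2) →ₐ[ℂ] Module.End ℂ (↥(nclSupp j j') → ℂ)} (hx0 : x ≠ 0)
    (hx : ¬IsOfFinOrder x) (hadm : Adm j j') (hR : IsNclRep (x ^ 2) x ε1 ε2 ε3 j j' R)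
    (hR' : IsNclRep (x ^ 2) x ε1 ε2 ε3' j j' R')
    (L : (↥(nclSupp j j') → ℂ) ≃ₗ[ℂ] (↥(nclSupp j j') → ℂ))
    (hL : ∀ (a : UqSO4 (x ^ 2)) (v : ↥(nclSupp j j') → ℂ), L (R a v) = R' a (L v)) :
    ε3 = ε3' := by
  have hconj : L.conj (R (J32 _)) = R' (J32 _) :=
    LinearMap.ext fun w => by rw [LinearEquiv.conj_apply_apply, hL, L.apply_symm_apply]
  have htr := LinearMap.trace_conj' (R (J32 _)) L
  rw [hconj, trace_J32 hR' hadm, trace_J32 hR hadm] at htr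
  have hj : 0 ≤ j ∧ 0 ≤ j' := by unfold Adm at hadm; omega
  have hC := mul_ne_zero
    (inv_ne_zero (mul_ne_zero (mul_ne_zero (qNum_ne_zero_s9 hx0 hx one_ne_zero)
      (qNum_ne_zero_s9 hx0 hx (a := -1) (by norm_num))) (sq_sub_inv_sq_ne_zero hx0 hx)))
    (mul_ne_zero Complex.I_ne_zero (mul_ne_zero (qNum_ne_zero_s9 hx0 hx (a := j' + 1) (by omega))
      (qNum_ne_zero_s9 hx0 hx (a := j + 1) (by omega))))
  exact (mul_left_cancel₀ hC htr).symm

theorem stmt_9_general (q sq : ℂ) (hq0 : q ≠ 0)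
    (hroot : ∀ n : ℕ, 1 ≤ n → q ^ n ≠ 1) (hs : sq ^ 2 = q)
    (j j' s s' : ℤ) (hadm : Adm j j') (hadm' : Adm s s') (hjj' : j' ≤ j) (hss' : s' ≤ s)
    (ε1 ε2 ε3 ε1' ε2' ε3' : ℂ)
    (hε1 : ε1 = 1 ∨ ε1 = -1) (hε2 : ε2 = 1 ∨ ε2 = -1)
    (hε1' : ε1' = 1 ∨ ε1' = -1) (hε2' : ε2' = 1 ∨ ε2' = -1)
    (hne : (j, j', ε1, ε2, ε3) ≠ (s, s', ε1', ε2', ε3'))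
    (R : UqSO4 q →ₐ[ℂ] Module.End ℂ (↥(nclSupp j j') → ℂ))
    (hR : IsNclRep q sq ε1 ε2 ε3 j j' R)
    (R' : UqSO4 q →ₐ[ℂ] Module.End ℂ (↥(nclSupp s s') → ℂ))
    (hR' : IsNclRep q sq ε1' ε2' ε3' s s' R') :
    ¬ ∃ L : (↥(nclSupp j j') → ℂ) ≃ₗ[ℂ] (↥(nclSupp s s') → ℂ),
        ∀ (a : UqSO4 q) (v : ↥(nclSupp j j') → ℂ), L (R a v) = R' a (L v) := by
  rintro ⟨L, hL⟩
  subst hs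
  have hsq0 : sq ≠ 0 := by rintro rfl; exact hq0 (zero_pow two_ne_zero)
  have hsq : ¬IsOfFinOrder sq := fun h => by
    obtain ⟨n, hn, h1⟩ := isOfFinOrder_iff_pow_eq_one.mp (h.pow (n := 2))
    exact hroot n hn h1
  have hL' (a : UqSO4 (sq ^ 2)) (w) : L.symm (R' a w) = R a (L.symm w) :=
    L.injective (by rw [hL, L.apply_symm_apply, L.apply_symm_apply])
  obtain ⟨rfl, rfl, k, l, hkl, h1, h2⟩ :=
    signs_eq_and_exists_weight_of_intertwines hsq0 hsq hadm hε1 hε2 hε1' hε2' hR hR' L hL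
  obtain ⟨-, -, k', l', hkl', h1', h2'⟩ :=
    signs_eq_and_exists_weight_of_intertwines hsq0 hsq hadm' hε1' hε2' hε1 hε2 hR' hR L.symm hL'
  obtain ⟨rfl, rfl⟩ : j = s ∧ j' = s' := by
    rw [mem_nclSupp] at hkl hkl'
    unfold Adm at hadm hadm'
    omega
  exact hne (by rw [eps3_eq_of_intertwines hsq0 hsq hadm hR hR' L hL])

/-- second part of Theorem 3: if `q` is not a root of unity, the
nonclassical-type representations `R^{(ε1,ε2,ε3)}_{jj'}` with `j ≥ j'` are pairwise
nonequivalent: no linear isomorphism intertwines two of them with distinct parameter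
tuples. -/
theorem stmt_9 (q sq : ℂ) (hq0 : q ≠ 0) (hq1 : q ≠ 1) (hqm1 : q ≠ -1)
    (hroot : ∀ n : ℕ, 1 ≤ n → q ^ n ≠ 1) (hs : sq ^ 2 = q)
    (j j' s s' : ℤ) (hadm : Adm j j') (hadm' : Adm s s') (hjj' : j' ≤ j) (hss' : s' ≤ s)
    (ε1 ε2 ε3 ε1' ε2' ε3' : ℂ)
    (hε1 : ε1 = 1 ∨ ε1 = -1) (hε2 : ε2 = 1 ∨ ε2 = -1) (hε3 : ε3 = 1 ∨ ε3 = -1)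
    (hε1' : ε1' = 1 ∨ ε1' = -1) (hε2' : ε2' = 1 ∨ ε2' = -1) (hε3' : ε3' = 1 ∨ ε3' = -1)
    (hne : (j, j', ε1, ε2, ε3) ≠ (s, s', ε1', ε2', ε3'))
    (R : UqSO4 q →ₐ[ℂ] Module.End ℂ (↥(nclSupp j j') → ℂ))
    (hR : IsNclRep q sq ε1 ε2 ε3 j j' R)
    (R' : UqSO4 q →ₐ[ℂ] Module.End ℂ (↥(nclSupp s s') → ℂ))
    (hR' : IsNclRep q sq ε1' ε2' ε3' s s' R') :
    ¬ ∃ L : (↥(nclSupp j j') → ℂ) ≃ₗ[ℂ] (↥(nclSupp s s') → ℂ),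
        ∀ (a : UqSO4 q) (v : ↥(nclSupp j j') → ℂ), L (R a v) = R' a (L v) :=
  stmt_9_general q sq hq0 hroot hs j j' s s' hadm hadm' hjj' hss' ε1 ε2 ε3 ε1' ε2' ε3' hε1 hε2 hε1'
    hε2' hne R hR R' hR'
end
end

section
/- Let q not be a root of unity, let R be a finite-dimensional representation of U'_q(so_4), let k, l ∈ (1/2)ℤ, and let v be a vector with R(I21)v = i·[k+l]·v and R(I43)v = i·[k−l]·v. Then: R(I21)(X1^{(k,l)}v) = i·[k+l+1]·X1^{(k,l)}v and R(I43)(X1^{(k,l)}v) = i·[k−l−1]·X1^{(k,l)}v; R(I21)(X2^{(k,l)}v) = i·[k+l−1]·X2^{(k,l)}v and R(I43)(X2^{(k,l)}v) = i·[k−l+1]·X2^{(k,l)}v; R(I21)(X3^{(k,l)}v) = i·[k+l+1]·X3^{(k,l)}v and R(I43)(X3^{(k,l)}v) = i·[k−l+1]·X3^{(k,l)}v; R(I21)(X4^{(k,l)}v) = i·[k+l−1]·X4^{(k,l)}v and R(I43)(X4^{(k,l)}v) = i·[k−l−1]·X4^{(k,l)}v. -/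
noncomputable section

open Classical

variable {q : ℂ}

/-- The operator `X1^{(k,l)}` (indices are doubled half-integers). -/
def X1 (s : ℂ) {V : Type} [AddCommGroup V] [Module ℂ V]
    (R : UqSO4 q →ₐ[ℂ] Module.End ℂ V) (k l : ℤ) : Module.End ℂ V :=
  -R (J41 q s) + (q ^ (-k)) • R (J32 q) - (Complex.I * s ^ (-k - l + 1)) • R (J42 q s)
    - (Complex.I * s ^ (-k + l - 1)) • R (J31 q s)

/-- The operator `X2^{(k,l)}` (indices are doubled half-integers). -/
def X2 (s : ℂ) {V : Type} [AddCommGroup V] [Module ℂ V]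
    (R : UqSO4 q →ₐ[ℂ] Module.End ℂ V) (k l : ℤ) : Module.End ℂ V :=
  -R (J41 q s) + (q ^ k) • R (J32 q) + (Complex.I * s ^ (k + l + 1)) • R (J42 q s)
    + (Complex.I * s ^ (k - l - 1)) • R (J31 q s)

/-- The operator `X3^{(k,l)}` (indices are doubled half-integers). -/
def X3 (s : ℂ) {V : Type} [AddCommGroup V] [Module ℂ V]
    (R : UqSO4 q →ₐ[ℂ] Module.End ℂ V) (k l : ℤ) : Module.End ℂ V :=
  R (J41 q s) + (q ^ (-l)) • R (J32 q) + (Complex.I * s ^ (-k - l + 1)) • R (J42 q s)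
    - (Complex.I * s ^ (k - l - 1)) • R (J31 q s)

/-- The operator `X4^{(k,l)}` (indices are doubled half-integers). -/
def X4 (s : ℂ) {V : Type} [AddCommGroup V] [Module ℂ V]
    (R : UqSO4 q →ₐ[ℂ] Module.End ℂ V) (k l : ℤ) : Module.End ℂ V :=
  R (J41 q s) + (q ^ l) • R (J32 q) - (Complex.I * s ^ (k + l + 1)) • R (J42 q s)
    + (Complex.I * s ^ (-k + l - 1)) • R (J31 q s)


/-! Write `a, b, c` for the images of `I21, I32, I43`. As `a` and `c` commute and act on `v` by
scalars, the vectors `b v, I31 v, I42 v, I41 v` behave like `e₁ ⊗ f₁, e₂ ⊗ f₁, e₁ ⊗ f₂, e₂ ⊗ f₂`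
in `ℂ² ⊗ ℂ²`, with `a` acting on the first factor and `c` on the second. On each factor the
q-Serre relation makes `a` (resp. `c`) act by a `2 × 2` matrix with eigenvalues `i[k + l ± 1]`
(resp. `i[k - l ± 1]`), and each `Xⱼ v` is, up to sign, a pure tensor of such eigenvectors.
The tensor picture rests on `I41 = [I21, I42]_q` and on the q-Serre relations for the pairs
`(I21, I42)` and `(I43, I31)`, all consequences of `I21 I43 = I43 I21`. -/

open Complex

def QSerre (q : ℂ) {A : Type} [Ring A] [Algebra ℂ A] (x y : A) : Prop :=
  y * x ^ 2 - (q + q⁻¹) • (x * y * x) + x ^ 2 * y = -y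

section QBracket

variable {A B : Type} [Ring A] [Algebra ℂ A] [Ring B] [Algebra ℂ B]

lemma map_qbr (f : A →ₐ[ℂ] B) (s : ℂ) (a b : A) : f (qbr s a b) = qbr s (f a) (f b) := by
  simp only [qbr, map_sub, map_smul, map_mul]

lemma qbr_inv (s : ℂ) (a b : A) : qbr s⁻¹ a b = -qbr s b a := by
  rw [qbr, qbr, inv_inv, neg_sub]

lemma qbr_qbr_of_commute {a c : A} (hac : Commute a c) (s : ℂ) (b : A) :
    qbr s (qbr s a b) c = qbr s a (qbr s b c) := by
  have h1 : b * a * c = b * c * a := by rw [mul_assoc, hac.eq, ← mul_assoc]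
  have h2 : c * a * b = a * c * b := by rw [hac.eq]
  simp only [qbr, mul_sub, sub_mul, smul_mul_assoc, mul_smul_comm, smul_sub, ← mul_assoc, h1, h2]
  module

namespace QSerre

variable {q : ℂ} {x y : A}

lemma map (h : QSerre q x y) (f : A →ₐ[ℂ] B) : QSerre q (f x) (f y) := by
  unfold QSerre at *
  simpa only [map_sub, map_add, map_smul, map_mul, map_pow, map_neg] using congrArg f h

lemma inv (h : QSerre q x y) : QSerre q⁻¹ x y := by
  rwa [QSerre, inv_inv, add_comm q⁻¹]

lemma neg (h : QSerre q x y) : QSerre q x (-y) := by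
  unfold QSerre at *
  calc -y * x ^ 2 - (q + q⁻¹) • (x * -y * x) + x ^ 2 * -y
      = -(y * x ^ 2 - (q + q⁻¹) • (x * y * x) + x ^ 2 * y) := by
        simp only [neg_mul, mul_neg, smul_neg]; abel
    _ = - -y := by rw [h]

lemma qbr_left {z : A} (h : QSerre q x y) (hxz : Commute x z) (s : ℂ) :
    QSerre q x (qbr s z y) := by
  have hx2 : Commute (x ^ 2) z := hxz.pow_left 2
  have h1 : y * z * x ^ 2 = y * x ^ 2 * z := by rw [mul_assoc, ← hx2.eq, ← mul_assoc]
  have h2 : x * z * y * x = z * x * y * x := by rw [hxz.eq]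
  have h3 : x * y * z * x = x * y * x * z := by rw [mul_assoc _ z, ← hxz.eq, ← mul_assoc]
  have h4 : x ^ 2 * z * y = z * x ^ 2 * y := by rw [hx2.eq]
  unfold QSerre at *
  calc qbr s z y * x ^ 2 - (q + q⁻¹) • (x * qbr s z y * x) + x ^ 2 * qbr s z y
      = s • (z * (y * x ^ 2 - (q + q⁻¹) • (x * y * x) + x ^ 2 * y))
        - s⁻¹ • ((y * x ^ 2 - (q + q⁻¹) • (x * y * x) + x ^ 2 * y) * z) := by
        simp only [qbr, mul_sub, sub_mul, mul_add, add_mul, smul_mul_assoc, mul_smul_comm,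
          smul_sub, ← mul_assoc, h1, h2, h3, h4]
        module
    _ = -qbr s z y := by rw [h, qbr]; simp only [mul_neg, neg_mul]; module

lemma qbr_right {z : A} (h : QSerre q x y) (hxz : Commute x z) (s : ℂ) :
    QSerre q x (qbr s y z) := by
  rw [← neg_neg (qbr s y z), ← qbr_inv]
  exact (h.qbr_left hxz s⁻¹).neg

end QSerre
end QBracket

section Relations

variable (q s : ℂ)

lemma commute_J21_J43 : Commute (J21 q) (J43 q) := by
  have h := RingQuot.mkAlgHom_rel ℂ (SO4Rel.r5 (q := q))
  rw [map_mul, map_mul] at h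
  exact h

lemma qSerre_J21_J32 : QSerre q (J21 q) (J32 q) := by
  have h := RingQuot.mkAlgHom_rel ℂ (SO4Rel.r2 (q := q))
  simp only [map_sub, map_add, map_mul, map_smul, map_pow, map_neg] at h
  exact h

lemma qSerre_J43_J32 : QSerre q (J43 q) (J32 q) := by
  have h := RingQuot.mkAlgHom_rel ℂ (SO4Rel.r3 (q := q))
  simp only [map_sub, map_add, map_mul, map_smul, map_pow, map_neg] at h
  exact h

lemma qSerre_J21_J42 : QSerre q (J21 q) (J42 q s) :=
  (qSerre_J21_J32 q).qbr_right (commute_J21_J43 q) s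

lemma qSerre_J43_J31 : QSerre q (J43 q) (J31 q s) :=
  (qSerre_J43_J32 q).qbr_left (commute_J21_J43 q).symm s

lemma J41_eq_qbr_J21_J42 : J41 q s = qbr s (J21 q) (J42 q s) :=
  qbr_qbr_of_commute (commute_J21_J43 q) s (J32 q)

end Relations

lemma sub_inv_ne_zero {K : Type} [Field K] {q : K} (hq0 : q ≠ 0) (hq1 : q ≠ 1) (hqm1 : q ≠ -1) :
    q - q⁻¹ ≠ 0 := by
  rw [sub_ne_zero, ne_eq, ← mul_eq_one_iff_eq_inv₀ hq0, mul_self_eq_one_iff, not_or]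
  exact ⟨hq1, hqm1⟩

section QNumber

variable {s : ℂ}

lemma qNum_inv (m : ℤ) : qNum (s⁻¹ ^ 2) s⁻¹ m = qNum (s ^ 2) s m := by
  rw [qNum, qNum, inv_zpow', inv_zpow', neg_neg, inv_pow, inv_inv, ← neg_sub, ← neg_sub (s ^ 2),
    neg_div_neg_eq]

variable (hs : s ≠ 0) (hq : s ^ 2 - (s ^ 2)⁻¹ ≠ 0)
include hs hq

lemma qNum_add_two (m : ℤ) : qNum (s ^ 2) s (m + 2) = s ^ 2 * qNum (s ^ 2) s m + s ^ (-m) := by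
  rw [qNum, qNum, div_eq_iff hq, add_mul, mul_assoc, div_mul_cancel₀ _ hq]
  simp only [neg_add, zpow_add₀ hs, zpow_neg, zpow_two]
  field_simp
  ring

lemma qNum_sub_two (m : ℤ) : qNum (s ^ 2) s (m - 2) = s ^ 2 * qNum (s ^ 2) s m - s ^ m := by
  rw [qNum, qNum, div_eq_iff hq, sub_mul, mul_assoc, div_mul_cancel₀ _ hq]
  simp only [neg_sub, zpow_sub₀ hs, zpow_neg, zpow_two]
  field_simp
  ring

end QNumber

section Eigenvectors

variable {V : Type} [AddCommGroup V] [Module ℂ V] {x y : Module.End ℂ V} {v : V} {s u α : ℂ}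

/- On `span {y v, qbr s x y v}` the operator `x` acts by a `2 × 2` matrix, by the definition of
`qbr` and the q-Serre relation; `hα` says that `(α, 1)` is an eigenvector of that matrix. -/
lemma smul_add_qbr_mem_eigenspace (hs : s ≠ 0) (hxy : QSerre (s ^ 2) x y) (hv : x v = u • v)
    (hα : α ^ 2 + s * (s ^ 2 - (s ^ 2)⁻¹) * u * α + s ^ 2 = 0) :
    α • y v + qbr s x y v ∈ x.eigenspace (s ^ 2 * u + α / s) := by
  have hxxy : x (x (y v)) = ((s ^ 2 + (s ^ 2)⁻¹) * u) • x (y v) - (u ^ 2 + 1) • y v := by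
    have := LinearMap.congr_fun hxy v
    simp only [LinearMap.sub_apply, LinearMap.add_apply, LinearMap.smul_apply,
      Module.End.mul_apply, pow_two, LinearMap.neg_apply, hv, map_smul] at this
    linear_combination (norm := module) this
  rw [Module.End.mem_eigenspace_iff]
  simp only [qbr, map_add, map_sub, map_smul, LinearMap.sub_apply, LinearMap.smul_apply,
    Module.End.mul_apply, hv, hxxy]
  match_scalars
  · field_simp
    ring
  · field_simp at hα ⊢
    linear_combination -hα

section Weights

variable (hs : s ≠ 0) (hq : s ^ 2 - (s ^ 2)⁻¹ ≠ 0) (hxy : QSerre (s ^ 2) x y) {m : ℤ}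
  (hv : x v = (I * qNum (s ^ 2) s m) • v)
include hs hq hxy hv

lemma smul_add_qbr_mem_eigenspace_add_two :
    (I * s ^ (1 - m)) • y v + qbr s x y v ∈ x.eigenspace (I * qNum (s ^ 2) s (m + 2)) := by
  have hsm : s ^ m ≠ 0 := zpow_ne_zero m hs
  have hD : (s ^ 2 - (s ^ 2)⁻¹) * qNum (s ^ 2) s m = s ^ m - (s ^ m)⁻¹ := by
    rw [← zpow_neg]
    exact mul_div_cancel₀ _ hq
  convert smul_add_qbr_mem_eigenspace hs hxy hv ?_ using 2
  · rw [qNum_add_two hs hq, zpow_sub₀ hs, zpow_one, zpow_neg]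
    field_simp
  · rw [zpow_sub₀ hs, zpow_one]
    linear_combination (s * I * (I * (s / s ^ m))) * hD + (I ^ 2 * s ^ 2) * mul_inv_cancel₀ hsm
      + s ^ 2 * I_sq

lemma smul_add_qbr_mem_eigenspace_sub_two :
    (-(I * s ^ (m + 1))) • y v + qbr s x y v ∈ x.eigenspace (I * qNum (s ^ 2) s (m - 2)) := by
  have hsm : s ^ m ≠ 0 := zpow_ne_zero m hs
  have hD : (s ^ 2 - (s ^ 2)⁻¹) * qNum (s ^ 2) s m = s ^ m - (s ^ m)⁻¹ := by
    rw [← zpow_neg]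
    exact mul_div_cancel₀ _ hq
  convert smul_add_qbr_mem_eigenspace hs hxy hv ?_ using 2
  · rw [qNum_sub_two hs hq, zpow_add₀ hs, zpow_one]
    field_simp
    ring
  · rw [zpow_add₀ hs, zpow_one]
    linear_combination (s * I * -(I * (s ^ m * s))) * hD + (I ^ 2 * s ^ 2) * mul_inv_cancel₀ hsm
      + s ^ 2 * I_sq

/- `qbr s y x = -qbr s⁻¹ x y` and `qNum` is invariant under `s ↦ s⁻¹`, so the eigenvectors built
from `qbr s y x` come from the two lemmas above at `s⁻¹`. -/
lemma smul_add_qbr_swap_mem_eigenspace_add_two :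
    (-(I * s ^ (m - 1))) • y v + qbr s y x v ∈ x.eigenspace (I * qNum (s ^ 2) s (m + 2)) := by
  have hq' : s⁻¹ ^ 2 - (s⁻¹ ^ 2)⁻¹ ≠ 0 := by
    rwa [inv_pow, inv_inv, ← neg_sub, neg_ne_zero]
  have h := smul_add_qbr_mem_eigenspace_add_two (inv_ne_zero hs) hq'
    (by rw [inv_pow]; exact hxy.inv) (by rwa [qNum_inv])
  rw [qNum_inv, qbr_inv, LinearMap.neg_apply, inv_zpow', neg_sub] at h
  convert neg_mem h using 1
  module

lemma smul_add_qbr_swap_mem_eigenspace_sub_two :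
    (I * s ^ (-(m + 1))) • y v + qbr s y x v ∈ x.eigenspace (I * qNum (s ^ 2) s (m - 2)) := by
  have hq' : s⁻¹ ^ 2 - (s⁻¹ ^ 2)⁻¹ ≠ 0 := by
    rwa [inv_pow, inv_inv, ← neg_sub, neg_ne_zero]
  have h := smul_add_qbr_mem_eigenspace_sub_two (inv_ne_zero hs) hq'
    (by rw [inv_pow]; exact hxy.inv) (by rwa [qNum_inv])
  rw [qNum_inv, qbr_inv, LinearMap.neg_apply, inv_zpow'] at h
  convert neg_mem h using 1
  module

end Weights

end Eigenvectors

section ProductVector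

variable {s : ℂ} {V : Type} [AddCommGroup V] [Module ℂ V] (R : UqSO4 (s ^ 2) →ₐ[ℂ] Module.End ℂ V)
  (v : V)

-- `(α e₁ + e₂) ⊗ (γ f₁ + f₂)` in the notation of the header.
def productVector (α γ : ℂ) : V :=
  (α * γ) • R (J32 _) v + γ • R (J31 _ s) v + α • R (J42 _ s) v + R (J41 _ s) v

variable {R v}

lemma productVector_mem_eigenspace_J21 {α γ μ : ℂ}
    (h : ∀ y, QSerre (s ^ 2) (R (J21 _)) y →
      α • y v + qbr s (R (J21 _)) y v ∈ (R (J21 _)).eigenspace μ) :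
    productVector R v α γ ∈ (R (J21 _)).eigenspace μ := by
  have hB := h _ ((qSerre_J21_J32 _).map R)
  have hQ := h _ ((qSerre_J21_J42 _ s).map R)
  convert add_mem (Submodule.smul_mem _ γ hB) hQ using 1
  rw [productVector, J41_eq_qbr_J21_J42, map_qbr, J31, map_qbr]
  module

lemma productVector_mem_eigenspace_J43 {α γ μ : ℂ}
    (h : ∀ y, QSerre (s ^ 2) (R (J43 _)) y →
      γ • y v + qbr s y (R (J43 _)) v ∈ (R (J43 _)).eigenspace μ) :
    productVector R v α γ ∈ (R (J43 _)).eigenspace μ := by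
  have hB := h _ ((qSerre_J43_J32 _).map R)
  have hP := h _ ((qSerre_J43_J31 _ s).map R)
  convert add_mem (Submodule.smul_mem _ α hB) hP using 1
  rw [productVector, J41, map_qbr, J42, map_qbr]
  module

variable (hs : s ≠ 0) (k l : ℤ)
include hs

lemma X1_apply :
    X1 s R k l v = -productVector R v (I * s ^ (1 - (k + l))) (I * s ^ (-(k - l + 1))) := by
  simp only [X1, productVector, LinearMap.add_apply, LinearMap.sub_apply, LinearMap.neg_apply,
    LinearMap.smul_apply]
  match_scalars
  all_goals simp only [mul_one, neg_mul, mul_neg, neg_neg, ← zpow_natCast, ← zpow_mul,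
    mul_mul_mul_comm I, I_mul_I, ← zpow_add₀ hs]
  all_goals ring_nf

lemma X2_apply :
    X2 s R k l v = -productVector R v (-(I * s ^ (k + l + 1))) (-(I * s ^ (k - l - 1))) := by
  simp only [X2, productVector, LinearMap.add_apply, LinearMap.neg_apply, LinearMap.smul_apply]
  match_scalars
  all_goals simp only [mul_one, neg_mul, mul_neg, neg_neg, ← zpow_natCast, ← zpow_mul,
    mul_mul_mul_comm I, I_mul_I, ← zpow_add₀ hs]
  all_goals ring_nf

lemma X3_apply :
    X3 s R k l v = productVector R v (I * s ^ (1 - (k + l))) (-(I * s ^ (k - l - 1))) := by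
  simp only [X3, productVector, LinearMap.add_apply, LinearMap.sub_apply, LinearMap.smul_apply]
  match_scalars
  all_goals simp only [mul_one, neg_mul, mul_neg, neg_neg, ← zpow_natCast, ← zpow_mul,
    mul_mul_mul_comm I, I_mul_I, ← zpow_add₀ hs]
  all_goals ring_nf

lemma X4_apply :
    X4 s R k l v = productVector R v (-(I * s ^ (k + l + 1))) (I * s ^ (-(k - l + 1))) := by
  simp only [X4, productVector, LinearMap.add_apply, LinearMap.sub_apply, LinearMap.smul_apply]
  match_scalars
  all_goals simp only [mul_one, neg_mul, neg_neg, ← zpow_natCast, ← zpow_mul,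
    mul_mul_mul_comm I, I_mul_I, ← zpow_add₀ hs]
  all_goals ring_nf

end ProductVector

theorem stmt_10_general (q s : ℂ) (hq0 : q ≠ 0) (hq1 : q ≠ 1) (hqm1 : q ≠ -1)
    (hs : s ^ 2 = q)
    (V : Type) [AddCommGroup V] [Module ℂ V]
    (R : UqSO4 q →ₐ[ℂ] Module.End ℂ V) (k l : ℤ) (v : V)
    (hv1 : R (J21 q) v = (Complex.I * qNum q s (k + l)) • v)
    (hv2 : R (J43 q) v = (Complex.I * qNum q s (k - l)) • v) :
    (R (J21 q) (X1 s R k l v) = (Complex.I * qNum q s (k + l + 2)) • X1 s R k l v ∧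
     R (J43 q) (X1 s R k l v) = (Complex.I * qNum q s (k - l - 2)) • X1 s R k l v) ∧
    (R (J21 q) (X2 s R k l v) = (Complex.I * qNum q s (k + l - 2)) • X2 s R k l v ∧
     R (J43 q) (X2 s R k l v) = (Complex.I * qNum q s (k - l + 2)) • X2 s R k l v) ∧
    (R (J21 q) (X3 s R k l v) = (Complex.I * qNum q s (k + l + 2)) • X3 s R k l v ∧
     R (J43 q) (X3 s R k l v) = (Complex.I * qNum q s (k - l + 2)) • X3 s R k l v) ∧
    (R (J21 q) (X4 s R k l v) = (Complex.I * qNum q s (k + l - 2)) • X4 s R k l v ∧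
     R (J43 q) (X4 s R k l v) = (Complex.I * qNum q s (k - l - 2)) • X4 s R k l v) := by
  subst hs
  have hs0 : s ≠ 0 := by
    rintro rfl
    exact hq0 (zero_pow two_ne_zero)
  have hq := sub_inv_ne_zero hq0 hq1 hqm1
  simp only [← Module.End.mem_eigenspace_iff, X1_apply hs0, X2_apply hs0, X3_apply hs0,
    X4_apply hs0, neg_mem_iff]
  refine ⟨⟨?_, ?_⟩, ⟨?_, ?_⟩, ⟨?_, ?_⟩, ⟨?_, ?_⟩⟩
  · exact productVector_mem_eigenspace_J21 fun y hy =>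
      smul_add_qbr_mem_eigenspace_add_two hs0 hq hy hv1
  · exact productVector_mem_eigenspace_J43 fun y hy =>
      smul_add_qbr_swap_mem_eigenspace_sub_two hs0 hq hy hv2
  · exact productVector_mem_eigenspace_J21 fun y hy =>
      smul_add_qbr_mem_eigenspace_sub_two hs0 hq hy hv1
  · exact productVector_mem_eigenspace_J43 fun y hy =>
      smul_add_qbr_swap_mem_eigenspace_add_two hs0 hq hy hv2
  · exact productVector_mem_eigenspace_J21 fun y hy =>
      smul_add_qbr_mem_eigenspace_add_two hs0 hq hy hv1
  · exact productVector_mem_eigenspace_J43 fun y hy =>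
      smul_add_qbr_swap_mem_eigenspace_add_two hs0 hq hy hv2
  · exact productVector_mem_eigenspace_J21 fun y hy =>
      smul_add_qbr_mem_eigenspace_sub_two hs0 hq hy hv1
  · exact productVector_mem_eigenspace_J43 fun y hy =>
      smul_add_qbr_swap_mem_eigenspace_sub_two hs0 hq hy hv2

/-- Lemma 1: the vectors `Xi^{(k,l)} v` are eigenvectors of `R(I21)` and
`R(I43)` with the shifted classical eigenvalues.  All half-integer indices `k, l, m` are
encoded by their doubles (so `[k+l]` is `qNum q s (k+l)` with doubled `k, l`). -/
theorem stmt_10 (q s : ℂ) (hq0 : q ≠ 0) (hq1 : q ≠ 1) (hqm1 : q ≠ -1)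
    (hroot : ∀ n : ℕ, 1 ≤ n → q ^ n ≠ 1) (hs : s ^ 2 = q)
    (V : Type) [AddCommGroup V] [Module ℂ V] [FiniteDimensional ℂ V] [Nontrivial V]
    (R : UqSO4 q →ₐ[ℂ] Module.End ℂ V) (k l : ℤ) (v : V)
    (hv1 : R (J21 q) v = (Complex.I * qNum q s (k + l)) • v)
    (hv2 : R (J43 q) v = (Complex.I * qNum q s (k - l)) • v) :
    (R (J21 q) (X1 s R k l v) = (Complex.I * qNum q s (k + l + 2)) • X1 s R k l v ∧
     R (J43 q) (X1 s R k l v) = (Complex.I * qNum q s (k - l - 2)) • X1 s R k l v) ∧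
    (R (J21 q) (X2 s R k l v) = (Complex.I * qNum q s (k + l - 2)) • X2 s R k l v ∧
     R (J43 q) (X2 s R k l v) = (Complex.I * qNum q s (k - l + 2)) • X2 s R k l v) ∧
    (R (J21 q) (X3 s R k l v) = (Complex.I * qNum q s (k + l + 2)) • X3 s R k l v ∧
     R (J43 q) (X3 s R k l v) = (Complex.I * qNum q s (k - l + 2)) • X3 s R k l v) ∧
    (R (J21 q) (X4 s R k l v) = (Complex.I * qNum q s (k + l - 2)) • X4 s R k l v ∧
     R (J43 q) (X4 s R k l v) = (Complex.I * qNum q s (k - l - 2)) • X4 s R k l v) :=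
  stmt_10_general q s hq0 hq1 hqm1 hs V R k l v hv1 hv2
end
end
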